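/- arXiv:1706.01747 — 9 statements merged into one kernel-verified Lean document; each statement's English description precedes it below -/
import Mathlib

section
/- A Boolean function f on {0,1}^n is a threshold function (i.e., there exist real weights w_1,...,w_n and threshold t such that f(x)=0 iff w·x ≤ t) if and only if f is asummable, meaning there is no k ≥ 2 and no multisets of k false points x_1,...,x_k and k true points y_1,...,y_k with x_1+...+x_k = y_1+...+y_k (summation in ℝ^n). -/
def toR {n : ℕ} (x : Fin n → Bool) : Fin n → ℝ := fun i => if x i then 1 else 0

open Matrix in
lemma map_mulVec' {m ι : Type} [Fintype ι] (A : Matrix m ι ℚ) (v : ι → ℚ) :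
    (A.map (Rat.cast : ℚ → ℝ)) *ᵥ (fun i => ((v i : ℚ) : ℝ)) = fun j => (((A *ᵥ v) j : ℚ) : ℝ) := by
  funext j
  simp [Matrix.mulVec, dotProduct]

open Matrix in
lemma exists_rat_coeffs {m ι : Type} [Fintype ι] [Fintype m] [DecidableEq ι]
    (M : Matrix m ι ℚ) (b : m → ℚ) (w : ι → ℝ)
    (hinj : Function.Injective fun v : ι → ℝ => (M.map (Rat.cast : ℚ → ℝ)) *ᵥ v)
    (hw : (M.map (Rat.cast : ℚ → ℝ)) *ᵥ w = fun j => ((b j : ℚ) : ℝ)) :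
    ∃ u : ι → ℚ, w = fun i => ((u i : ℚ) : ℝ) := by
  set Mr := M.map (Rat.cast : ℚ → ℝ) with hMrdef
  have hker : LinearMap.ker (Mrᵀ * Mr).mulVecLin = ⊥ := by
    rw [Matrix.ker_mulVecLin_transpose_mul_self, LinearMap.ker_eq_bot]
    exact hinj
  have hinj2 : Function.Injective ((Mrᵀ * Mr).mulVec) := by
    have := LinearMap.ker_eq_bot.mp hker
    exact this
  have hunit : IsUnit (Mrᵀ * Mr) := Matrix.mulVec_injective_iff_isUnit.mp hinj2
  have hdetR : IsUnit (Mrᵀ * Mr).det := (Matrix.isUnit_iff_isUnit_det _).mp hunit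
  have hMM : Mrᵀ * Mr = (Mᵀ * M).map (Rat.cast : ℚ → ℝ) := by
    have : ((Mᵀ * M).map (Rat.cast : ℚ → ℝ)) = (Mᵀ * M).map (Rat.castHom ℝ) := rfl
    rw [this, Matrix.map_mul]
    congr 1
  have hdetQ : IsUnit (Mᵀ * M).det := by
    rw [isUnit_iff_ne_zero]
    intro h
    have : (Mrᵀ * Mr).det = 0 := by
      rw [hMM]
      have : ((Mᵀ * M).map (Rat.cast : ℚ → ℝ)).det = ((Mᵀ * M).det : ℝ) :=
        (RingHom.map_det (Rat.castHom ℝ) (Mᵀ * M)).symm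
      rw [this, h]; simp
    rw [this] at hdetR
    simp at hdetR
  refine ⟨(Mᵀ * M)⁻¹ *ᵥ (Mᵀ *ᵥ b), ?_⟩
  apply hinj2
  have lhs : (Mrᵀ * Mr) *ᵥ w = fun j => (((Mᵀ *ᵥ b) j : ℚ) : ℝ) := by
    rw [← Matrix.mulVec_mulVec, hw]
    have : Mrᵀ = (Mᵀ).map (Rat.cast : ℚ → ℝ) := Matrix.transpose_map.symm
    rw [this]
    exact map_mulVec' Mᵀ b
  rw [lhs, hMM, map_mulVec', Matrix.mulVec_mulVec, Matrix.mul_nonsing_inv _ hdetQ,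
    Matrix.one_mulVec]

open Matrix in
lemma summable_aux {n : ℕ} (f : (Fin n → Bool) → Bool) {ι : Type} [Fintype ι]
    (z : ι → Fin n → ℝ) (w : ι → ℝ)
    (a b : ι → Fin n → Bool)
    (ha : ∀ i, f (a i) = false) (hb : ∀ i, f (b i) = true)
    (hab : ∀ i, toR (b i) - toR (a i) = z i)
    (hindep : AffineIndependent ℝ z) (hpos : ∀ i, 0 < w i)
    (hsum1 : ∑ i, w i = 1) (hsumz : ∑ i, w i • z i = 0) :
    ∃ k : ℕ, 2 ≤ k ∧ ∃ x y : Fin k → (Fin n → Bool),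
        (∀ i, f (x i) = false) ∧ (∀ i, f (y i) = true) ∧
        ∑ i, toR (x i) = ∑ i, toR (y i) := by
  classical
  set M : Matrix (Fin n ⊕ Unit) ι ℚ := Matrix.of fun r i =>
    Sum.elim (fun j => (if b i j then (1:ℚ) else 0) - (if a i j then 1 else 0)) (fun _ => 1) r
    with hMdef
  have hMent : ∀ (j : Fin n) (i : ι), ((M (Sum.inl j) i : ℚ) : ℝ) = z i j := by
    intro j i
    have : z i j = toR (b i) j - toR (a i) j := by
      rw [← hab i]; simp [Pi.sub_apply]
    rw [this]
    simp [hMdef, toR, apply_ite (Rat.cast : ℚ → ℝ)]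
  have hb0 : (M.map (Rat.cast : ℚ → ℝ)) *ᵥ w
      = fun r => (((Sum.elim (fun _ => (0:ℚ)) (fun _ => 1) r : ℚ)) : ℝ) := by
    funext r
    cases r with
    | inl j =>
      have hz := congr_fun hsumz j
      simp only [Finset.sum_apply, Pi.smul_apply, smul_eq_mul, Pi.zero_apply] at hz
      simp only [Matrix.mulVec, dotProduct, Matrix.map_apply, Sum.elim_inl, Rat.cast_zero]
      rw [← hz]
      exact Finset.sum_congr rfl fun i _ => by rw [hMent j i]; ring
    | inr _ =>
      simp only [Matrix.mulVec, dotProduct, Matrix.map_apply, Sum.elim_inr, Rat.cast_one]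
      simp only [hMdef, Matrix.of_apply, Sum.elim_inr, Rat.cast_one, one_mul]
      exact hsum1
  have hinj : Function.Injective fun v : ι → ℝ => (M.map (Rat.cast : ℚ → ℝ)) *ᵥ v := by
    have hz : ∀ v : ι → ℝ, (M.map (Rat.cast : ℚ → ℝ)) *ᵥ v = 0 → v = 0 := by
      intro v hv
      have h1 : ∑ i, v i = 0 := by
        have := congr_fun hv (Sum.inr ())
        simpa [Matrix.mulVec, dotProduct, hMdef] using this
      have h2 : ∑ i, v i • z i = 0 := by
        funext j
        have := congr_fun hv (Sum.inl j)
        simp only [Matrix.mulVec, dotProduct, Matrix.map_apply, Pi.zero_apply] at this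
        simp only [Finset.sum_apply, Pi.smul_apply, smul_eq_mul, Pi.zero_apply]
        rw [← this]
        refine Finset.sum_congr rfl fun i _ => ?_
        rw [hMent j i]; ring
      funext i
      exact affineIndependent_iff.mp hindep Finset.univ v h1 h2 i (Finset.mem_univ i)
    intro v₁ v₂ h
    dsimp only at h
    have := hz (v₁ - v₂) (by rw [Matrix.mulVec_sub, h, sub_self])
    exact sub_eq_zero.mp this
  obtain ⟨u, hu⟩ := exists_rat_coeffs M (Sum.elim (fun _ => (0:ℚ)) (fun _ => 1)) w hinj hb0
  have hupos : ∀ i, 0 < u i := by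
    intro i
    have : (0:ℝ) < ((u i : ℚ) : ℝ) := by rw [← congr_fun hu i]; exact hpos i
    exact_mod_cast this
  set N₀ : ℕ := ∏ i, (u i).den with hN₀
  have hN₀pos : 0 < N₀ := Finset.prod_pos fun i _ => (u i).pos
  set N : ℕ := 2 * N₀ with hNdef
  have hdvd : ∀ i, (u i).den ∣ N := fun i =>
    dvd_mul_of_dvd_right (Finset.dvd_prod_of_mem _ (Finset.mem_univ i)) 2
  set m : ι → ℕ := fun i => (u i).num.toNat * (N / (u i).den) with hmdef
  have key : ∀ i, ((m i : ℕ) : ℚ) = u i * N := by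
    intro i
    have hden : ((u i).den : ℚ) ≠ 0 := Nat.cast_ne_zero.mpr (u i).pos.ne'
    have h1 : (((u i).num.toNat : ℕ) : ℚ) = ((u i).num : ℚ) := by
      exact_mod_cast congrArg (Int.cast : ℤ → ℚ)
        (Int.toNat_of_nonneg (Rat.num_nonneg.mpr (hupos i).le))
    have h2 : ((u i).den : ℚ) * ((N / (u i).den : ℕ) : ℚ) = (N : ℚ) := by
      rw [← Nat.cast_mul, Nat.mul_div_cancel' (hdvd i)]
    have hmul : u i * ((u i).den : ℚ) = ((u i).num : ℚ) :=
      calc u i * ((u i).den : ℚ)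
          = (((u i).num : ℚ) / ((u i).den : ℚ)) * ((u i).den : ℚ) := by
            rw [Rat.num_div_den]
        _ = ((u i).num : ℚ) := div_mul_cancel₀ _ hden
    have e1 : ((m i : ℕ) : ℚ) = (((u i).num.toNat : ℕ) : ℚ) * ((N / (u i).den : ℕ) : ℚ) := by
      simp only [hmdef]; rw [Nat.cast_mul]
    rw [e1, h1, ← h2, ← hmul]
    ring
  have keyR : ∀ i, ((m i : ℕ) : ℝ) = w i * N := by
    intro i
    have h := congrArg (Rat.cast (K := ℝ)) (key i)
    push_cast at h
    rw [congr_fun hu i]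
    exact h
  set k : ℕ := ∑ i, m i with hkdef
  have hkN : (k : ℝ) = (N : ℝ) := by
    rw [hkdef, Nat.cast_sum, Finset.sum_congr rfl fun i _ => keyR i, ← Finset.sum_mul,
      hsum1, one_mul]
  have hkeq : k = N := by exact_mod_cast hkN
  have hk2 : 2 ≤ k := by rw [hkeq, hNdef]; omega
  have hvec : ∑ i, ((m i : ℕ) : ℝ) • z i = 0 := by
    have h : ∀ i : ι, ((m i : ℕ) : ℝ) • z i = (N : ℝ) • (w i • z i) := fun i => by
      rw [keyR i, mul_comm, mul_smul]
    rw [Finset.sum_congr rfl fun i _ => h i, ← Finset.smul_sum, hsumz, smul_zero]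
  have hcard : Fintype.card ((i : ι) × Fin (m i)) = k := by simp [hkdef]
  let e : ((i : ι) × Fin (m i)) ≃ Fin k := Fintype.equivFinOfCardEq hcard
  refine ⟨k, hk2, fun j => a (e.symm j).1, fun j => b (e.symm j).1,
    fun j => ha _, fun j => hb _, ?_⟩
  have h1 : ∑ j : Fin k, toR (a (e.symm j).1) = ∑ i, (m i) • toR (a i) := by
    rw [← Fintype.sum_equiv e (fun s => toR (a s.1)) (fun j => toR (a (e.symm j).1))
      (fun s => by simp)]
    rw [← Finset.univ_sigma_univ, Finset.sum_sigma]
    simp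
  have h2 : ∑ j : Fin k, toR (b (e.symm j).1) = ∑ i, (m i) • toR (b i) := by
    rw [← Fintype.sum_equiv e (fun s => toR (b s.1)) (fun j => toR (b (e.symm j).1))
      (fun s => by simp)]
    rw [← Finset.univ_sigma_univ, Finset.sum_sigma]
    simp
  rw [h1, h2]
  have h3 : ∑ i, (m i) • (toR (b i) - toR (a i)) = 0 := by
    have h : ∀ i : ι, (m i) • (toR (b i) - toR (a i)) = ((m i : ℕ) : ℝ) • z i := fun i => by
      rw [hab i, Nat.cast_smul_eq_nsmul]
    rw [Finset.sum_congr rfl fun i _ => h i, hvec]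
  simp only [smul_sub, Finset.sum_sub_distrib, sub_eq_zero] at h3
  exact h3.symm

open Matrix in
lemma summable_of_mem_hull {n : ℕ} (f : (Fin n → Bool) → Bool)
    (h0 : (0 : Fin n → ℝ) ∈ convexHull ℝ
      {d : Fin n → ℝ | ∃ a b, f a = false ∧ f b = true ∧ toR b - toR a = d}) :
    ∃ k : ℕ, 2 ≤ k ∧ ∃ x y : Fin k → (Fin n → Bool),
        (∀ i, f (x i) = false) ∧ (∀ i, f (y i) = true) ∧
        ∑ i, toR (x i) = ∑ i, toR (y i) := by
  obtain ⟨ι, hfin, z, w, hrange, hindep, hpos, hsum1, hsumz⟩ :=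
    eq_pos_convex_span_of_mem_convexHull h0
  choose a b ha hb hab using fun i : ι => hrange (Set.mem_range_self i)
  exact summable_aux f z w a b ha hb hab hindep hpos hsum1 hsumz

lemma sep_lemma {n : ℕ} (f : (Fin n → Bool) → Bool)
    (h0 : (0 : Fin n → ℝ) ∉ convexHull ℝ
      {d : Fin n → ℝ | ∃ a b, f a = false ∧ f b = true ∧ toR b - toR a = d}) :
    ∃ w : Fin n → ℝ, ∀ x y, f x = false → f y = true →
      ∑ i, w i * toR x i < ∑ i, w i * toR y i := by
  classical
  set D := {d : Fin n → ℝ | ∃ a b, f a = false ∧ f b = true ∧ toR b - toR a = d} with hD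
  have hfin : D.Finite := by
    apply Set.Finite.subset
      (Set.finite_range (fun p : (Fin n → Bool) × (Fin n → Bool) => toR p.2 - toR p.1))
    rintro d ⟨a, b, _, _, rfl⟩
    exact ⟨(a, b), rfl⟩
  obtain ⟨g, u, hgu, hgt⟩ := geometric_hahn_banach_point_closed
    (convex_convexHull ℝ D) (hfin.isClosed_convexHull (𝕜 := ℝ)) h0
  have hu0 : (0:ℝ) < u := by simpa using hgu
  have key : ∀ v : Fin n → Bool,
      ∑ i, g (fun j => if i = j then (1:ℝ) else 0) * toR v i = g (toR v) := by
    intro v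
    have h := LinearMap.pi_apply_eq_sum_univ (g : (Fin n → ℝ) →ₗ[ℝ] ℝ) (toR v)
    simp only [ContinuousLinearMap.coe_coe] at h
    rw [h]
    exact Finset.sum_congr rfl fun i _ => by rw [smul_eq_mul]; ring
  refine ⟨fun i => g (fun j => if i = j then 1 else 0), fun x y hx hy => ?_⟩
  have hd : (toR y - toR x) ∈ D := ⟨x, y, hx, hy, rfl⟩
  have hgd : u < g (toR y - toR x) := hgt _ (subset_convexHull ℝ D hd)
  rw [map_sub] at hgd
  have h1 := key x
  have h2 := key y
  dsimp only
  rw [h1, h2]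
  linarith

/-- A Boolean function is a threshold function iff it is asummable (Elgot). -/
theorem threshold_iff_asummable (n : ℕ) (f : (Fin n → Bool) → Bool) :
    (∃ (w : Fin n → ℝ) (t : ℝ), ∀ x, f x = false ↔ ∑ i, w i * toR x i ≤ t) ↔
    ¬ ∃ k : ℕ, 2 ≤ k ∧ ∃ x y : Fin k → (Fin n → Bool),
        (∀ i, f (x i) = false) ∧ (∀ i, f (y i) = true) ∧
        ∑ i, toR (x i) = ∑ i, toR (y i) := by
  classical
  constructor
  · rintro ⟨w, t, hw⟩ ⟨k, hk, x, y, hx, hy, hsum⟩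
    have hxle : ∀ i : Fin k, ∑ j, w j * toR (x i) j ≤ t := fun i => (hw (x i)).mp (hx i)
    have hygt : ∀ i : Fin k, t < ∑ j, w j * toR (y i) j := by
      intro i
      by_contra h
      push_neg at h
      have := (hw (y i)).mpr h
      rw [hy i] at this
      exact Bool.noConfusion this
    have hne : (Finset.univ : Finset (Fin k)).Nonempty := ⟨⟨0, by omega⟩, Finset.mem_univ _⟩
    have h1 : ∑ i : Fin k, ∑ j, w j * toR (x i) j ≤ (k:ℝ) * t := by
      calc ∑ i : Fin k, ∑ j, w j * toR (x i) j ≤ ∑ _i : Fin k, t :=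
            Finset.sum_le_sum fun i _ => hxle i
        _ = (k:ℝ) * t := by simp [Finset.sum_const, nsmul_eq_mul]
    have h2 : (k:ℝ) * t < ∑ i : Fin k, ∑ j, w j * toR (y i) j := by
      have := Finset.sum_lt_sum_of_nonempty hne (fun i _ => hygt i)
      simpa [Finset.sum_const, nsmul_eq_mul] using this
    have hswap : ∀ x : Fin k → Fin n → Bool, ∑ i : Fin k, ∑ j, w j * toR (x i) j
        = ∑ j, w j * (∑ i : Fin k, toR (x i)) j := by
      intro x
      rw [Finset.sum_comm]
      refine Finset.sum_congr rfl fun j _ => ?_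
      rw [Finset.sum_apply, Finset.mul_sum]
    have heq : ∑ i : Fin k, ∑ j, w j * toR (x i) j = ∑ i : Fin k, ∑ j, w j * toR (y i) j := by
      rw [hswap x, hswap y, hsum]
    linarith
  · intro hns
    by_cases hT : ∃ v, f v = true
    · by_cases hF : ∃ v, f v = false
      · have h0 : (0 : Fin n → ℝ) ∉ convexHull ℝ
            {d : Fin n → ℝ | ∃ a b, f a = false ∧ f b = true ∧ toR b - toR a = d} :=
          fun h => hns (summable_of_mem_hull f h)
        obtain ⟨w, hw⟩ := sep_lemma f h0
        obtain ⟨v0, hv0⟩ := hF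
        set S : Finset (Fin n → Bool) := Finset.univ.filter (fun v => f v = false) with hS
        have hSne : S.Nonempty := ⟨v0, Finset.mem_filter.mpr ⟨Finset.mem_univ _, hv0⟩⟩
        refine ⟨w, S.sup' hSne (fun v => ∑ i, w i * toR v i), fun x => ?_⟩
        constructor
        · intro hx
          exact Finset.le_sup' (fun v => ∑ i, w i * toR v i) (Finset.mem_filter.mpr ⟨Finset.mem_univ _, hx⟩)
        · intro hle
          by_contra hx
          have hxt : f x = true := by revert hx; cases f x <;> simp
          have hlt : S.sup' hSne (fun v => ∑ i, w i * toR v i) < ∑ i, w i * toR x i := by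
            rw [Finset.sup'_lt_iff]
            intro v hv
            have hvf : f v = false := (Finset.mem_filter.mp hv).2
            exact hw v x hvf hxt
          linarith
      · push_neg at hF
        refine ⟨0, -1, fun x => ?_⟩
        simp only [Pi.zero_apply, zero_mul, Finset.sum_const_zero]
        constructor
        · intro h; exact absurd h (hF x)
        · intro h; norm_num at h
    · push_neg at hT
      refine ⟨0, 0, fun x => ?_⟩
      simp only [Pi.zero_apply, zero_mul, Finset.sum_const_zero]
      have hfx : f x = false := by
        cases h : f x
        · rfl
        · exact absurd h (hT x)
      simp [hfx]
end

section
/- For every n ≥ 4, the function f_n defined by the DNF x_1x_2 ∨ x_1x_3 ∨ ... ∨ x_1x_{n-1} ∨ x_2x_3···x_n is not split: there is no index i such that the restriction f_n with x_i=0 is identically 0 or the restriction with x_i=1 is identically 1. -/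
/-- `f` is split if fixing some single variable makes it constant `0` (fixing to `0`)
or constant `1` (fixing to `1`). -/
def Split {n : ℕ} (f : (Fin n → Bool) → Bool) : Prop :=
  ∃ i : Fin n, (∀ x, f (Function.update x i false) = false) ∨
    (∀ x, f (Function.update x i true) = true)

/-- `f_n` is not split. -/
theorem fn_not_split (n : ℕ) (hn : 4 ≤ n) (f : (Fin n → Bool) → Bool)
    (hf : ∀ x, f x = true ↔
      ((x ⟨0, by omega⟩ = true ∧ ∃ i : Fin n, 1 ≤ i.1 ∧ i.1 ≤ n - 2 ∧ x i = true) ∨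
        (∀ i : Fin n, 1 ≤ i.1 → x i = true))) :
    ¬ Split f := by
  rintro ⟨i, h | h⟩
  · -- restriction x_i = 0 constant 0; exhibit an input making f = 1
    have key := h (fun _ => true)
    set y : Fin n → Bool := Function.update (fun _ => true) i false with hy
    have hyt : f y = true := by
      rw [hf]
      by_cases hi : i.1 = 0
      · right
        intro j hj
        have hne : j ≠ i := by
          intro e; rw [e] at hj; omega
        simp [hy, Function.update_of_ne hne]
      · left
        constructor
        · have hne : (⟨0, by omega⟩ : Fin n) ≠ i := by
            intro e
            apply hi
            rw [← e]
          simp [hy, Function.update_of_ne hne]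
        · by_cases h1 : i.1 = 1
          · refine ⟨⟨2, by omega⟩, by simp, by simp; omega, ?_⟩
            have hne : (⟨2, by omega⟩ : Fin n) ≠ i := by
              intro e
              have : (⟨2, by omega⟩ : Fin n).1 = i.1 := by rw [e]
              simp at this; omega
            simp [hy, Function.update_of_ne hne]
          · refine ⟨⟨1, by omega⟩, by simp, by simp; omega, ?_⟩
            have hne : (⟨1, by omega⟩ : Fin n) ≠ i := by
              intro e
              have : (⟨1, by omega⟩ : Fin n).1 = i.1 := by rw [e]
              simp at this; omega
            simp [hy, Function.update_of_ne hne]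
    rw [key] at hyt
    exact absurd hyt (by simp)
  · -- restriction x_i = 1 constant 1; exhibit an input making f = 0
    have key := h (fun _ => false)
    set y : Fin n → Bool := Function.update (fun _ => false) i true with hy
    rw [hf] at key
    rcases key with ⟨h0, j, hj1, hj2, hjv⟩ | hall
    · by_cases hi : i.1 = 0
      · have hne : j ≠ i := by intro e; rw [e] at hj1; omega
        rw [hy, Function.update_of_ne hne] at hjv
        simp at hjv
      · have hne : (⟨0, by omega⟩ : Fin n) ≠ i := by
          intro e; apply hi; rw [← e]
        rw [hy, Function.update_of_ne hne] at h0
        simp at h0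
    · by_cases h1 : i.1 = 1
      · have hk := hall ⟨2, by omega⟩ (by simp)
        have hne : (⟨2, by omega⟩ : Fin n) ≠ i := by
          intro e
          have : (⟨2, by omega⟩ : Fin n).1 = i.1 := by rw [e]
          simp at this; omega
        rw [hy, Function.update_of_ne hne] at hk
        simp at hk
      · have hk := hall ⟨1, by omega⟩ (by simp)
        have hne : (⟨1, by omega⟩ : Fin n) ≠ i := by
          intro e
          have : (⟨1, by omega⟩ : Fin n).1 = i.1 := by rw [e]
          simp at this; omega
        rw [hy, Function.update_of_ne hne] at hk
        simp at hk
end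

section
/- Let g be a positive threshold Boolean function and let x_{i_1},...,x_{i_k} be distinct relevant variables of g, each variable i_j equipped with an x_{i_j}-extremal pair (a_{i_j}, b_{i_j}). Then the undirected graph H with vertex set {a_{i_j}, b_{i_j} : j ∈ [k]} and edge set {{a_{i_j}, b_{i_j}} : j ∈ [k]} is acyclic. -/
/-- `f` is a threshold function. -/
def IsThreshold {n : ℕ} (f : (Fin n → Bool) → Bool) : Prop :=
  ∃ (w : Fin n → ℝ) (t : ℝ), ∀ x, f x = false ↔ ∑ i, w i * toR x i ≤ t

/-- `f` is positive (monotone nondecreasing coordinatewise). -/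
def Positive {n : ℕ} (f : (Fin n → Bool) → Bool) : Prop :=
  ∀ x y : Fin n → Bool, (∀ i, x i ≤ y i) → f x = true → f y = true

/-- Variable `j` is relevant for `f`. -/
def Relevant {n : ℕ} (f : (Fin n → Bool) → Bool) (j : Fin n) : Prop :=
  ∃ x, f (Function.update x j false) ≠ f (Function.update x j true)

/-- `a` is a maximal false point of `f`. -/
def MaxZero {n : ℕ} (f : (Fin n → Bool) → Bool) (a : Fin n → Bool) : Prop :=
  f a = false ∧ ∀ b, (∀ j, a j ≤ b j) → b ≠ a → f b = true

/-- `a` is a minimal true point of `f`. -/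
def MinOne {n : ℕ} (f : (Fin n → Bool) → Bool) (a : Fin n → Bool) : Prop :=
  f a = true ∧ ∀ b, (∀ j, b j ≤ a j) → b ≠ a → f b = false

lemma list_sum_darts_telescope {V : Type*} {G : SimpleGraph V} (φ : V → ℤ)
    {u v : V} (p : G.Walk u v) :
    (p.darts.map (fun d => φ d.toProd.2 - φ d.toProd.1)).sum = φ v - φ u := by
  induction p with
  | nil => simp
  | cons h q ih => simp [ih]

lemma list_sum_map_sub' {α : Type*} (l : List α) (f g : α → ℤ) :
    (l.map (fun x => f x - g x)).sum = (l.map f).sum - (l.map g).sum := by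
  induction l with
  | nil => simp
  | cons x l ih => simp [ih]; ring

lemma nonneg_weights {n : ℕ} {f : (Fin n → Bool) → Bool}
    (hpos : Positive f)
    (w : Fin n → ℝ) (t : ℝ) (hw : ∀ x, f x = false ↔ ∑ i, w i * toR x i ≤ t) :
    ∃ (w' : Fin n → ℝ), (∀ i, 0 ≤ w' i) ∧ ∀ x, (f x = false ↔ ∑ i, w' i * toR x i ≤ t) := by
  refine ⟨fun i => if 0 ≤ w i then w i else 0, fun i => by by_cases h : 0 ≤ w i <;> simp [h], ?_⟩
  intro x
  set xlo : Fin n → Bool := fun m => if 0 ≤ w m then x m else false with hxlo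
  set xhi : Fin n → Bool := fun m => if 0 ≤ w m then x m else true with hxhi
  have eq1 : ∑ i, (if 0 ≤ w i then w i else 0) * toR x i = ∑ i, w i * toR xlo i := by
    refine Finset.sum_congr rfl fun i _ => ?_
    by_cases h : 0 ≤ w i <;> simp [toR, hxlo, h]
  have eq2 : ∑ i, w i * toR xhi i
      = ∑ i, (if 0 ≤ w i then w i else 0) * toR x i + ∑ i, (if 0 ≤ w i then (0:ℝ) else w i) := by
    rw [← Finset.sum_add_distrib]
    refine Finset.sum_congr rfl fun i _ => ?_
    by_cases h : 0 ≤ w i <;> simp [toR, hxhi, h]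
  have hs : ∑ i, (if 0 ≤ w i then (0:ℝ) else w i) ≤ 0 := by
    refine Finset.sum_nonpos fun i _ => ?_
    by_cases h : 0 ≤ w i <;> simp [h] <;> linarith [lt_of_not_ge h]
  constructor
  · intro hx
    have hlo : f xlo = false := by
      by_contra hne
      have : f x = true := hpos xlo x (fun i => by by_cases h : 0 ≤ w i <;> simp [hxlo, h])
        (by revert hne; cases f xlo <;> simp)
      rw [this] at hx; exact Bool.true_eq_false.mp hx
    have := (hw xlo).mp hlo
    linarith [eq1]
  · intro hsum
    by_contra hne
    have hx : f x = true := by revert hne; cases f x <;> simp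
    have hhi : f xhi = true := hpos x xhi (fun i => by by_cases h : 0 ≤ w i <;> simp [hxhi, h]) hx
    have : ¬ (∑ i, w i * toR xhi i ≤ t) := by
      intro hc
      have := (hw xhi).mpr hc
      rw [hhi] at this; exact Bool.true_eq_false.mp this
    apply this
    rw [eq2]; linarith

/-- The extremal graph of a positive threshold function, built from an
`x_{i_j}`-extremal pair `(a j, b j)` for each of `k` distinct relevant variables,
is acyclic. -/
theorem extremal_graph_acyclic (n k : ℕ) (f : (Fin n → Bool) → Bool)
    (hpos : Positive f) (hth : IsThreshold f)
    (idx : Fin k → Fin n) (hinj : Function.Injective idx)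
    (hrel : ∀ j, Relevant f (idx j))
    (a b : Fin k → (Fin n → Bool))
    (ha : ∀ j, MaxZero f (a j) ∧ a j (idx j) = false)
    (hb : ∀ j, MinOne f (b j) ∧ b j (idx j) = true)
    (hab : ∀ j, ∀ m, m ≠ idx j → b j m ≤ a j m) :
    (SimpleGraph.fromRel (fun u v => ∃ j, u = a j ∧ v = b j)).IsAcyclic := by
  classical
  obtain ⟨w0, t, hw0⟩ := hth
  obtain ⟨w, hwnn, hw⟩ := nonneg_weights hpos w0 t hw0
  intro v p hp
  have hafalse : ∀ j, f (a j) = false := fun j => ((ha j).1).1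
  have hbtrue : ∀ j, f (b j) = true := fun j => ((hb j).1).1
  have hane : ∀ j j', a j ≠ b j' := by
    intro j j' h
    have h1 := hafalse j
    rw [h, hbtrue j'] at h1
    exact Bool.true_eq_false.mp h1
  have hwa : ∀ j, ∑ i, w i * toR (a j) i ≤ t := fun j => (hw (a j)).mp (hafalse j)
  have hwb : ∀ j, ¬ (∑ i, w i * toR (b j) i ≤ t) := by
    intro j hc
    have := (hw (b j)).mpr hc
    rw [hbtrue j] at this; exact Bool.true_eq_false.mp this
  have huniq : ∀ j j', a j = a j' → b j = b j' → j = j' := by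
    intro j j' h1 h2
    by_contra hne
    have hii : idx j ≠ idx j' := fun h => hne (hinj h)
    have hle := hab j' (idx j) hii
    rw [← h1, ← h2, (ha j).2, (hb j).2] at hle
    exact absurd hle (by decide)
  -- decompose darts
  have hd : ∀ d : (SimpleGraph.fromRel fun u v => ∃ j, u = a j ∧ v = b j).Dart, ∃ j, (d.toProd.1 = a j ∧ d.toProd.2 = b j) ∨
      (d.toProd.1 = b j ∧ d.toProd.2 = a j) := by
    intro d
    have hadj := d.adj
    rw [SimpleGraph.fromRel_adj] at hadj
    rcases hadj.2 with ⟨j, h1, h2⟩ | ⟨j, h1, h2⟩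
    · exact ⟨j, Or.inl ⟨h1, h2⟩⟩
    · exact ⟨j, Or.inr ⟨h2, h1⟩⟩
  set jf : (SimpleGraph.fromRel fun u v => ∃ j, u = a j ∧ v = b j).Dart → Fin k := fun d => (hd d).choose with hjfdef
  have hjf : ∀ d : (SimpleGraph.fromRel fun u v => ∃ j, u = a j ∧ v = b j).Dart, (d.toProd.1 = a (jf d) ∧ d.toProd.2 = b (jf d)) ∨
      (d.toProd.1 = b (jf d) ∧ d.toProd.2 = a (jf d)) := fun d => (hd d).choose_spec
  have hedge : ∀ d : (SimpleGraph.fromRel fun u v => ∃ j, u = a j ∧ v = b j).Dart, d.edge = s(a (jf d), b (jf d)) := by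
    intro d
    rcases hjf d with ⟨h1, h2⟩ | ⟨h1, h2⟩
    · show s(d.toProd.1, d.toProd.2) = _
      rw [← h1, ← h2]
    · show s(d.toProd.1, d.toProd.2) = _
      rw [Sym2.eq_swap, ← h1, ← h2]
  set J : List (Fin k) := p.darts.map jf with hJ
  have hJnodup : J.Nodup := by
    have hpair : Function.Injective (fun j : Fin k => s(a j, b j)) := by
      intro j j' h
      rcases Sym2.eq_iff.mp h with ⟨h1, h2⟩ | ⟨h1, h2⟩
      · exact huniq _ _ h1 h2
      · exact absurd h1 (hane j j')
    have hedges : p.edges = J.map (fun j => s(a j, b j)) := by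
      rw [hJ, List.map_map]
      show p.darts.map SimpleGraph.Dart.edge = _
      exact List.map_congr_left fun d _ => hedge d
    have hnd := hp.isTrail.edges_nodup
    rw [hedges] at hnd
    exact hnd.of_map _
  -- integer coordinate differences
  set δ : Fin k → Fin n → ℤ :=
    fun j m => (if b j m then 1 else 0) - (if a j m then 1 else 0) with hδ
  set S : Finset (Fin k) := J.toFinset with hSdef
  set D : Fin n → ℤ := fun m => ∑ j ∈ S, δ j m with hD
  have hlistD : ∀ m, D m = (J.map (fun j => δ j m)).sum := by
    intro m
    rw [hD, hSdef]
    exact List.sum_toFinset _ hJnodup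
  -- (a) D m ≤ 1
  have hDle1 : ∀ m, D m ≤ 1 := by
    intro m
    have hstep : D m ≤ ∑ j ∈ S, (if idx j = m then (1:ℤ) else 0) := by
      refine Finset.sum_le_sum fun j _ => ?_
      by_cases hm : idx j = m
      · subst hm
        simp [hδ, (ha j).2, (hb j).2]
      · have hle := hab j m (fun h => hm h.symm)
        rw [if_neg hm]
        cases hbm : b j m <;> cases ham : a j m
        · simp [hδ, hbm, ham]
        · simp [hδ, hbm, ham]
        · rw [hbm, ham] at hle; exact absurd hle (by decide)
        · simp [hδ, hbm, ham]
    have hcard : ∑ j ∈ S, (if idx j = m then (1:ℤ) else 0) ≤ 1 := by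
      rw [Finset.sum_boole]
      have : (S.filter (fun j => idx j = m)).card ≤ 1 := by
        refine Finset.card_le_one.mpr fun j1 h1 j2 h2 => ?_
        have e1 := (Finset.mem_filter.mp h1).2
        have e2 := (Finset.mem_filter.mp h2).2
        exact hinj (e1.trans e2.symm)
      exact_mod_cast this
    exact hstep.trans hcard
  -- (b) 2 ∣ D m
  have hDeven : ∀ m, (2:ℤ) ∣ D m := by
    intro m
    have htel := list_sum_darts_telescope (fun x => if x m then (1:ℤ) else 0) p
    rw [sub_self] at htel
    have hdvd : (2:ℤ) ∣ (p.darts.map (fun d => δ (jf d) m -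
        ((if d.toProd.2 m then (1:ℤ) else 0) - (if d.toProd.1 m then 1 else 0)))).sum := by
      refine List.dvd_sum fun x hx => ?_
      obtain ⟨d, hdmem, rfl⟩ := List.mem_map.mp hx
      rcases hjf d with ⟨h1', h2'⟩ | ⟨h1', h2'⟩
      · rw [h1', h2']
        simp [hδ]
      · rw [h1', h2']
        have : δ (jf d) m - ((if a (jf d) m then (1:ℤ) else 0) - (if b (jf d) m then 1 else 0))
            = 2 * δ (jf d) m := by
          simp only [hδ]; ring
        rw [this]
        exact Dvd.intro _ rfl
    rw [list_sum_map_sub', htel, sub_zero] at hdvd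
    rwa [hlistD, hJ, List.map_map]
  have hDle0 : ∀ m, D m ≤ 0 := by
    intro m
    obtain ⟨c, hc⟩ := hDeven m
    have := hDle1 m
    omega
  -- S is nonempty
  have hlen : p.darts ≠ [] := by
    have h3 := hp.three_le_length
    intro hnil
    rw [← SimpleGraph.Walk.length_darts, hnil] at h3
    simp at h3
  obtain ⟨d0, hd0⟩ := List.exists_mem_of_ne_nil _ hlen
  have hSne : S.Nonempty := ⟨jf d0, by
    rw [hSdef]
    exact List.mem_toFinset.mpr (by rw [hJ]; exact List.mem_map_of_mem hd0)⟩
  -- positive total weight difference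
  have hposum : 0 < ∑ j ∈ S, ((∑ i, w i * toR (b j) i) - (∑ i, w i * toR (a j) i)) :=
    Finset.sum_pos (fun j _ => sub_pos.mpr (lt_of_le_of_lt (hwa j) (not_le.mp (hwb j)))) hSne
  -- rewrite as weighted coordinate sums
  have hterm : ∀ j, (∑ i, w i * toR (b j) i) - (∑ i, w i * toR (a j) i)
      = ∑ i, w i * ((δ j i : ℤ) : ℝ) := by
    intro j
    rw [← Finset.sum_sub_distrib]
    refine Finset.sum_congr rfl fun i _ => ?_
    simp only [hδ, toR]
    push_cast
    cases b j i <;> cases a j i <;> simp <;> ring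
  have hkey : ∑ j ∈ S, ((∑ i, w i * toR (b j) i) - (∑ i, w i * toR (a j) i))
      = ∑ m, w m * ((D m : ℤ) : ℝ) := by
    rw [Finset.sum_congr rfl fun j _ => hterm j, Finset.sum_comm]
    refine Finset.sum_congr rfl fun m _ => ?_
    rw [← Finset.mul_sum]
    congr 1
    rw [hD]
    push_cast
    rfl
  have hnonpos : ∑ m, w m * ((D m : ℤ) : ℝ) ≤ 0 := by
    refine Finset.sum_nonpos fun m _ => mul_nonpos_of_nonneg_of_nonpos (hwnn m) ?_
    exact_mod_cast hDle0 m
  rw [hkey] at hposum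
  linarith
end

section
/- Let f be a positive threshold Boolean function on {0,1}^n which is not split, and suppose there exists i such that both restrictions f_0 = f|_{x_i=0} and f_1 = f|_{x_i=1} are split. Then there exists s ≠ i such that f_0 restricted to x_s=0 is identically 0 and f_1 restricted to x_s=1 is identically 1. -/
lemma sum_update_eq {n : ℕ} (w : Fin n → ℝ) (v : Fin n → Bool) (j : Fin n) (b : Bool) :
    ∑ k, w k * toR (Function.update v j b) k
      = (∑ k, w k * toR v k) + w j * ((if b then 1 else 0) - toR v j) := by
  have h : ∀ k, w k * toR (Function.update v j b) k
      = w k * toR v k + (if k = j then w j * ((if b then (1:ℝ) else 0) - toR v j) else 0) := by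
    intro k
    by_cases h : k = j
    · subst h
      rw [show toR (Function.update v k b) k = (if b then (1:ℝ) else 0) from by
        simp [toR]]
      rw [if_pos rfl]
      ring
    · simp [toR, Function.update_of_ne h, h]
  simp only [h, Finset.sum_add_distrib]
  congr 1
  simp

lemma toR_update_ne {n : ℕ} (v : Fin n → Bool) (j m : Fin n) (b : Bool) (h : m ≠ j) :
    toR (Function.update v j b) m = toR v m := by
  simp [toR, Function.update_of_ne h]

/-- If a positive threshold `f` is not split but both restrictions
`f|_{xᵢ=0}` and `f|_{xᵢ=1}` are split, then there is a single variable `x_s`, `s ≠ i`,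
with `f|_{xᵢ=0,x_s=0} ≡ 0` and `f|_{xᵢ=1,x_s=1} ≡ 1`. -/
theorem common_split_variable (n : ℕ) (f : (Fin n → Bool) → Bool)
    (hpos : Positive f) (hth : IsThreshold f) (hns : ¬ Split f) (i : Fin n)
    (h0 : ∃ p, p ≠ i ∧
      ((∀ x, f (Function.update (Function.update x i false) p false) = false) ∨
        (∀ x, f (Function.update (Function.update x i false) p true) = true)))
    (h1 : ∃ p, p ≠ i ∧
      ((∀ x, f (Function.update (Function.update x i true) p false) = false) ∨
        (∀ x, f (Function.update (Function.update x i true) p true) = true))) :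
    ∃ s, s ≠ i ∧
      (∀ x, f (Function.update (Function.update x i false) s false) = false) ∧
      (∀ x, f (Function.update (Function.update x i true) s true) = true) := by
  obtain ⟨p, hpi, hp⟩ := h0
  obtain ⟨q, hqi, hq⟩ := h1
  -- the split of f|_{i=0} must be the ≡0 kind
  have hp0 : ∀ x, f (Function.update (Function.update x i false) p false) = false := by
    rcases hp with hp | hp
    · exact hp
    · exfalso
      apply hns
      refine ⟨p, Or.inr fun x => ?_⟩
      apply hpos (Function.update (Function.update x i false) p true)
        (Function.update x p true) _ (hp x)
      intro k
      by_cases hk : k = p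
      · subst hk; simp
      · rw [Function.update_of_ne hk, Function.update_of_ne hk]
        by_cases hk' : k = i
        · subst hk'; simp
        · rw [Function.update_of_ne hk']
  -- the split of f|_{i=1} must be the ≡1 kind
  have hq1 : ∀ x, f (Function.update (Function.update x i true) q true) = true := by
    rcases hq with hq | hq
    · exfalso
      apply hns
      refine ⟨q, Or.inl fun x => ?_⟩
      cases h : f (Function.update x q false) with
      | false => rfl
      | true =>
        have := hpos (Function.update x q false)
          (Function.update (Function.update x i true) q false) ?_ h
        · rw [hq x] at this; exact absurd this (by simp)
        · intro k
          by_cases hk : k = q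
          · subst hk; simp
          · rw [Function.update_of_ne hk, Function.update_of_ne hk]
            by_cases hk' : k = i
            · subst hk'; simp
            · rw [Function.update_of_ne hk']
    · exact hq
  by_cases H : ∀ x, f (Function.update (Function.update x i false) q false) = false
  · exact ⟨q, hqi, H, hq1⟩
  by_cases H' : ∀ x, f (Function.update (Function.update x i true) p true) = true
  · exact ⟨p, hpi, hp0, H'⟩
  exfalso
  push_neg at H H'
  obtain ⟨x0, hx0⟩ := H
  obtain ⟨x1, hx1⟩ := H'
  rw [Bool.ne_false_iff] at hx0
  simp only [ne_eq, Bool.not_eq_true] at hx1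
  obtain ⟨w, t, hw⟩ := hth
  set T : Fin n → Bool := fun _ => true with hT
  set F : Fin n → Bool := fun _ => false with hF
  -- the four extremal points
  set P1 := Function.update (Function.update T i false) p false with hP1
  set P2 := Function.update (Function.update F i true) q true with hP2
  set P3 := Function.update (Function.update T i false) q false with hP3
  set P4 := Function.update (Function.update F i true) p true with hP4
  have hfP1 : f P1 = false := hp0 T
  have hfP2 : f P2 = true := hq1 F
  -- f P3 = true by monotonicity from x0
  have hfP3 : f P3 = true := by
    apply hpos (Function.update (Function.update x0 i false) q false) P3 _ hx0
    intro k
    simp only [hP3]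
    by_cases hk : k = q
    · subst hk; simp [P3]
    · rw [Function.update_of_ne hk, Function.update_of_ne hk]
      by_cases hk' : k = i
      · subst hk'; simp
      · rw [Function.update_of_ne hk', Function.update_of_ne hk']
        simp [T]
  -- f P4 = false by monotonicity from x1
  have hfP4 : f P4 = false := by
    cases h : f P4 with
    | false => rfl
    | true =>
      have := hpos P4 (Function.update (Function.update x1 i true) p true) ?_ h
      · rw [hx1] at this; exact absurd this (by simp)
      · intro k
        simp only [hP4]
        by_cases hk : k = p
        · subst hk; simp [P4]
        · rw [Function.update_of_ne hk, Function.update_of_ne hk]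
          by_cases hk' : k = i
          · subst hk'; simp [P4]
          · rw [Function.update_of_ne hk', Function.update_of_ne hk']
            simp [P4, F]
  -- now compute the sums
  have hTi : toR T i = 1 := by simp [toR, T]
  have hFi : toR F i = 0 := by simp [toR, F]
  have sT : ∑ k, w k * toR T k = ∑ k, w k := by
    apply Finset.sum_congr rfl; intro k _; simp [toR, T]
  have sF : ∑ k, w k * toR F k = 0 := by
    apply Finset.sum_eq_zero; intro k _; simp [toR, F]
  have sP1 : ∑ k, w k * toR P1 k = (∑ k, w k) - w i - w p := by
    rw [hP1, sum_update_eq, sum_update_eq, sT, hTi,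
      toR_update_ne T i p false hpi, show toR T p = 1 from by simp [toR, T]]
    simp
    try ring
  have sP2 : ∑ k, w k * toR P2 k = w i + w q := by
    rw [hP2, sum_update_eq, sum_update_eq, sF, hFi,
      toR_update_ne F i q true hqi, show toR F q = 0 from by simp [toR, F]]
    simp
    try ring
  have sP3 : ∑ k, w k * toR P3 k = (∑ k, w k) - w i - w q := by
    rw [hP3, sum_update_eq, sum_update_eq, sT, hTi,
      toR_update_ne T i q false hqi, show toR T q = 1 from by simp [toR, T]]
    simp
    try ring
  have sP4 : ∑ k, w k * toR P4 k = w i + w p := by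
    rw [hP4, sum_update_eq, sum_update_eq, sF, hFi,
      toR_update_ne F i p true hpi, show toR F p = 0 from by simp [toR, F]]
    simp
    try ring
  have i1 : (∑ k, w k) - w i - w p ≤ t := by
    have := (hw P1).mp hfP1; rwa [sP1] at this
  have i2 : ¬ (w i + w q ≤ t) := by
    intro h
    have := (hw P2).mpr (by rwa [sP2])
    rw [hfP2] at this; exact absurd this (by simp)
  have i3 : ¬ ((∑ k, w k) - w i - w q ≤ t) := by
    intro h
    have := (hw P3).mpr (by rwa [sP3])
    rw [hfP3] at this; exact absurd this (by simp)
  have i4 : w i + w p ≤ t := by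
    have := (hw P4).mp hfP4; rwa [sP4] at this
  push_neg at i2 i3
  linarith
end

section
/- Let f be a positive Boolean function on {0,1}^n which is not split, with restrictions f_0 = f|_{x_i=0}, f_1 = f|_{x_i=1}, and suppose s ≠ i satisfies f_0|_{x_s=0} ≡ 0 and f_1|_{x_s=1} ≡ 1. Then if a point a ∈ {0,1}^{n-1} is an extremal point (maximal zero or minimal one) of f_{α} for α ∈ {0,1}, then the point a' ∈ {0,1}^n obtained by inserting α at coordinate i is an extremal point of f. -/
private lemma bool_le_of : ∀ x y : Bool, x ≤ y → y = false → x = false := by decide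

private lemma bool_le_of' : ∀ x y : Bool, x ≤ y → x = true → y = true := by decide

private lemma bool_le_all : ∀ x : Bool, false ≤ x ∧ x ≤ true := by decide

/-- `a` (with `a i = α`) corresponds to a maximal false point of the restriction
`f|_{xᵢ = α}`. -/
def MaxZeroRel {n : ℕ} (i : Fin n) (f : (Fin n → Bool) → Bool) (a : Fin n → Bool) : Prop :=
  f a = false ∧ ∀ b, b i = a i → (∀ j, a j ≤ b j) → b ≠ a → f b = true

/-- `a` (with `a i = α`) corresponds to a minimal true point of the restriction
`f|_{xᵢ = α}`. -/
def MinOneRel {n : ℕ} (i : Fin n) (f : (Fin n → Bool) → Bool) (a : Fin n → Bool) : Prop :=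
  f a = true ∧ ∀ b, b i = a i → (∀ j, b j ≤ a j) → b ≠ a → f b = false

/-- Let `f` be positive and not split, with `s ≠ i` such that `f|_{xᵢ=0,x_s=0} ≡ 0`
and `f|_{xᵢ=1,x_s=1} ≡ 1`. Then every extremal point of `f|_{xᵢ=α}`, with `α` inserted
at coordinate `i`, is an extremal point of `f`. -/
theorem extremal_of_restriction_extremal (n : ℕ) (f : (Fin n → Bool) → Bool)
    (hpos : Positive f) (hns : ¬ Split f) (i s : Fin n) (hsi : s ≠ i)
    (h00 : ∀ x, x i = false → x s = false → f x = false)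
    (h11 : ∀ x, x i = true → x s = true → f x = true) :
    ∀ a : Fin n → Bool,
      (MaxZeroRel i f a → MaxZero f a) ∧ (MinOneRel i f a → MinOne f a) := by
  intro a
  constructor
  · rintro ⟨hfa, hmax⟩
    refine ⟨hfa, ?_⟩
    intro b hab hba
    by_cases hbi : b i = a i
    · exact hmax b hbi hab hba
    · -- a i = false, b i = true
      have hai : a i = false := by
        cases h1 : a i
        · rfl
        · exact absurd (bool_le_of' _ _ (hab i) h1) (by rw [h1] at hbi; exact hbi)
      have hbit : b i = true := by
        cases h2 : b i
        · exact absurd (h2.trans hai.symm) hbi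
        · rfl
      by_cases hbs : b s = true
      · exact h11 b hbit hbs
      · have hbsf : b s = false := Bool.eq_false_iff.mpr hbs
        have hasf : a s = false := bool_le_of _ _ (hab s) hbsf
        by_cases hb'a : Function.update b i false = a
        · -- b = update a i true; show every other coordinate of a is true
          have hall : ∀ j, j ≠ i → j ≠ s → a j = true := by
            intro j hji hjs
            by_contra haj
            have hajf : a j = false := Bool.eq_false_iff.mpr haj
            set u := Function.update a j true with hu
            have hui : u i = a i := Function.update_of_ne (Ne.symm hji) _ _
            have hua : u ≠ a := by
              intro h
              have := congrFun h j
              rw [hu, Function.update_self, hajf] at this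
              exact Bool.true_eq_false.mp this
            have hle : ∀ k, a k ≤ u k := by
              intro k
              by_cases hk : k = j
              · subst hk; rw [hu, Function.update_self]; exact (bool_le_all _).2
              · rw [hu, Function.update_of_ne hk]
            have h1 : f u = true := hmax u hui hle hua
            have h2 : f u = false := by
              apply h00
              · rw [hui]; exact hai
              · rw [hu, Function.update_of_ne (Ne.symm hjs), hasf]
            rw [h1] at h2; exact absurd h2 (by simp)
          -- suppose f b = false; then f is split at s
          by_contra hfb
          have hfbf : f b = false := Bool.eq_false_iff.mpr hfb
          apply hns
          refine ⟨s, Or.inl ?_⟩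
          intro x
          have hle : ∀ k, Function.update x s false k ≤ b k := by
            intro k
            by_cases hk : k = s
            · subst hk; rw [Function.update_self]; exact (bool_le_all _).1
            · rw [Function.update_of_ne hk]
              by_cases hki : k = i
              · subst hki; rw [hbit]; exact (bool_le_all _).2
              · have hbk : b k = a k := by
                  have := congrFun hb'a k
                  rwa [Function.update_of_ne hki] at this
                rw [hbk, hall k hki hk]; exact (bool_le_all _).2
          cases hfx : f (Function.update x s false)
          · rfl
          · exact absurd (hpos _ b hle hfx) (by rw [hfbf]; simp)
        · -- f (update b i false) = true by slice-maximality; then f b = true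
          set b' := Function.update b i false with hb'
          have hb'i : b' i = a i := by rw [hb', Function.update_self, hai]
          have hle : ∀ k, a k ≤ b' k := by
            intro k
            by_cases hk : k = i
            · subst hk; rw [hb'i]
            · rw [hb', Function.update_of_ne hk]; exact hab k
          have h1 : f b' = true := hmax b' hb'i hle hb'a
          have hle2 : ∀ k, b' k ≤ b k := by
            intro k
            by_cases hk : k = i
            · subst hk; rw [hb', Function.update_self]; exact (bool_le_all _).1
            · rw [hb', Function.update_of_ne hk]
          exact hpos b' b hle2 h1
  · rintro ⟨hfa, hmin⟩
    refine ⟨hfa, ?_⟩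
    intro b hab hba
    by_cases hbi : b i = a i
    · exact hmin b hbi hab hba
    · -- a i = true, b i = false
      have hbif : b i = false := by
        cases h2 : b i
        · rfl
        · exact absurd (bool_le_of' _ _ (hab i) h2) (fun h => hbi (h2.trans h.symm))
      have hai : a i = true := by
        cases h1 : a i
        · exact absurd (hbif.trans h1.symm) hbi
        · rfl
      by_cases hbs : b s = true
      · have hast : a s = true := bool_le_of' _ _ (hab s) hbs
        by_cases hb'a : Function.update b i true = a
        · have hall : ∀ j, j ≠ i → j ≠ s → a j = false := by
            intro j hji hjs
            by_contra haj
            have hajt : a j = true := by simpa using haj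
            set u := Function.update a j false with hu
            have hui : u i = a i := Function.update_of_ne (Ne.symm hji) _ _
            have hua : u ≠ a := by
              intro h
              have := congrFun h j
              rw [hu, Function.update_self, hajt] at this
              exact Bool.false_eq_true.mp this
            have hle : ∀ k, u k ≤ a k := by
              intro k
              by_cases hk : k = j
              · subst hk; rw [hu, Function.update_self]; exact (bool_le_all _).1
              · rw [hu, Function.update_of_ne hk]
            have h1 : f u = false := hmin u hui hle hua
            have h2 : f u = true := by
              apply h11
              · rw [hui]; exact hai
              · rw [hu, Function.update_of_ne (Ne.symm hjs), hast]
            rw [h1] at h2; exact absurd h2 (by simp)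
          -- suppose f b = true; then f is split at s
          cases hfb : f b with
          | false => rfl
          | true =>
            exfalso
            apply hns
            refine ⟨s, Or.inr ?_⟩
            intro x
            have hle : ∀ k, b k ≤ Function.update x s true k := by
              intro k
              by_cases hk : k = s
              · subst hk; rw [Function.update_self]; exact (bool_le_all _).2
              · rw [Function.update_of_ne hk]
                by_cases hki : k = i
                · subst hki; rw [hbif]; exact (bool_le_all _).1
                · have hbk : b k = a k := by
                    have := congrFun hb'a k
                    rwa [Function.update_of_ne hki] at this
                  rw [hbk, hall k hki hk]; exact (bool_le_all _).1
            exact hpos b _ hle hfb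
        · set b' := Function.update b i true with hb'
          have hb'i : b' i = a i := by rw [hb', Function.update_self, hai]
          have hle : ∀ k, b' k ≤ a k := by
            intro k
            by_cases hk : k = i
            · subst hk; rw [hb'i]
            · rw [hb', Function.update_of_ne hk]; exact hab k
          have h1 : f b' = false := hmin b' hb'i hle hb'a
          have hle2 : ∀ k, b k ≤ b' k := by
            intro k
            by_cases hk : k = i
            · subst hk; rw [hb', Function.update_self]; exact (bool_le_all _).2
            · rw [hb', Function.update_of_ne hk]
          cases hfb : f b
          · rfl
          · exact absurd (hpos b b' hle2 hfb) (by rw [h1]; simp)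
      · have hbsf : b s = false := Bool.eq_false_iff.mpr hbs
        exact h00 b hbif hbsf
end

section
/- Let f be a positive Boolean function on {0,1}^n, let f_0 = f|_{x_n=0} and f_1 = f|_{x_n=1}. If a ∈ {0,1}^{n-1} is a maximal zero of f_0 but the point (a,0) is not a maximal zero of f, then a is a maximal zero of f_1. Dually, if b is a minimal one of f_1 but (b,1) is not a minimal one of f, then b is a minimal one of f_0. -/
/-- If `a` is a maximal zero of `f₀ = f|_{xₙ=0}` but `(a,0)` is not a maximal zero of `f`,
then `a` is a maximal zero of `f₁ = f|_{xₙ=1}`; dually for minimal ones. -/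
theorem extremal_restriction_transfer (n : ℕ) (hn : 1 ≤ n)
    (f : (Fin n → Bool) → Bool) (hpos : Positive f) :
    (∀ a : Fin n → Bool, a ⟨n - 1, by omega⟩ = false →
      MaxZeroRel ⟨n - 1, by omega⟩ f a → ¬ MaxZero f a →
      MaxZeroRel ⟨n - 1, by omega⟩ f (Function.update a ⟨n - 1, by omega⟩ true)) ∧
    (∀ b : Fin n → Bool, b ⟨n - 1, by omega⟩ = true →
      MinOneRel ⟨n - 1, by omega⟩ f b → ¬ MinOne f b →
      MinOneRel ⟨n - 1, by omega⟩ f (Function.update b ⟨n - 1, by omega⟩ false)) := by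
  set i : Fin n := ⟨n - 1, by omega⟩ with hi
  constructor
  · rintro a hai ⟨hfa, hmax⟩ hnot
    -- get witness b ≥ a, b ≠ a, f b = false
    have ⟨b, hb_ge, hb_ne, hfb⟩ : ∃ b, (∀ j, a j ≤ b j) ∧ b ≠ a ∧ f b = false := by
      by_contra h
      push_neg at h
      exact hnot ⟨hfa, fun b hge hne => by
        by_contra hfb'
        exact absurd (h b hge hne) (by simp [Bool.eq_false_iff.mpr hfb'])⟩
    have hbi : b i = true := by
      by_contra hbi'
      have hbi'' : b i = false := Bool.eq_false_iff.mpr hbi'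
      have := hmax b (by rw [hbi'', hai]) hb_ge hb_ne
      simp [this] at hfb
    have ha' : ∀ j, Function.update a i true j ≤ b j := by
      intro j
      by_cases hj : j = i
      · subst hj; simp [hbi]
      · simp [Function.update_of_ne hj]; exact hb_ge j
    constructor
    · -- f (update a i true) = false via positivity contrapositive
      by_contra h
      have : f b = true := hpos _ b ha' (by simpa using h)
      simp [this] at hfb
    · intro c hci hcge hcne
      set c' := Function.update c i false with hc'
      have hc'i : c' i = a i := by simp [hc', hai]
      have hc'ge : ∀ j, a j ≤ c' j := by
        intro j
        by_cases hj : j = i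
        · subst hj; simp [hc', hai]
        · simpa [hc', Function.update_of_ne hj] using
            (by simpa [Function.update_of_ne hj] using hcge j)
      have hc'ne : c' ≠ a := by
        intro h
        apply hcne
        funext j
        by_cases hj : j = i
        · subst hj
          simp [hci]
        · have := congrFun h j
          simp [hc', Function.update_of_ne hj] at this
          simp [Function.update_of_ne hj, this]
      have h1 : f c' = true := hmax c' hc'i hc'ge hc'ne
      have hle : ∀ j, c' j ≤ c j := by
        intro j
        by_cases hj : j = i
        · subst hj; simp [hc']
        · simp [hc', Function.update_of_ne hj]
      exact hpos c' c hle h1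
  · rintro b hbi ⟨hfb, hmin⟩ hnot
    have ⟨a, ha_le, ha_ne, hfa⟩ : ∃ a, (∀ j, a j ≤ b j) ∧ a ≠ b ∧ f a = true := by
      by_contra h
      push_neg at h
      exact hnot ⟨hfb, fun a hle hne => by
        by_contra hfa'
        simp at hfa'
        exact absurd hfa' (h a hle hne)⟩
    have hai : a i = false := by
      by_contra hai'
      have hai'' : a i = true := by simpa using hai'
      have := hmin a (by rw [hai'', hbi]) ha_le ha_ne
      simp [this] at hfa
    have hb' : ∀ j, a j ≤ Function.update b i false j := by
      intro j
      by_cases hj : j = i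
      · subst hj; simp [hai]
      · simp [Function.update_of_ne hj]; exact ha_le j
    constructor
    · exact hpos a _ hb' hfa
    · intro c hci hcle hcne
      set c' := Function.update c i true with hc'
      have hc'i : c' i = b i := by simp [hc', hbi]
      have hc'le : ∀ j, c' j ≤ b j := by
        intro j
        by_cases hj : j = i
        · subst hj; simp [hc', hbi]
        · simpa [hc', Function.update_of_ne hj] using
            (by simpa [Function.update_of_ne hj] using hcle j)
      have hc'ne : c' ≠ b := by
        intro h
        apply hcne
        funext j
        by_cases hj : j = i
        · subst hj
          simp [hci]
        · have := congrFun h j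
          simp [hc', Function.update_of_ne hj] at this
          simp [Function.update_of_ne hj, this]
      have h1 : f c' = false := hmin c' hc'i hc'le hc'ne
      have hle : ∀ j, c j ≤ c' j := by
        intro j
        by_cases hj : j = i
        · subst hj; simp [hc']
        · simp [hc', Function.update_of_ne hj]
      by_contra h
      have : f c' = true := hpos c c' hle (by simpa using h)
      simp [this] at h1
end

section
/- Let f be a positive threshold Boolean function on {0,1}^n with k ≥ 0 relevant variables. Then the number of extremal points of f (maximal zeros plus minimal ones) is at least k+1. -/
section Aux

variable {n : ℕ} {f : (Fin n → Bool) → Bool}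


lemma bool_le_false {b : Bool} (h : b ≤ false) : b = false := by
  cases b
  · rfl
  · simpa using Bool.le_iff_imp.mp h rfl

lemma bool_true_le {b : Bool} (h : true ≤ b) : b = true := by
  cases b
  · simpa using Bool.le_iff_imp.mp h rfl
  · rfl

lemma toR_mono {x y : Fin n → Bool} (h : ∀ i, x i ≤ y i) (i : Fin n) :
    toR x i ≤ toR y i := by
  have hi := h i
  unfold toR
  cases hx : x i <;> cases hy : y i <;> simp_all
  simpa using bool_true_le hi

/-- Below any true point there is a minimal true point. -/
lemma exists_minOne_le (x : Fin n → Bool) (hx : f x = true) :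
    ∃ p, MinOne f p ∧ ∀ i, p i ≤ x i := by
  classical
  generalize hm : (Finset.univ.filter fun i => x i = true).card = m
  induction m using Nat.strong_induction_on generalizing x with
  | _ m ih =>
    by_cases hmin : ∀ b, (∀ j, b j ≤ x j) → b ≠ x → f b = false
    · exact ⟨x, ⟨hx, hmin⟩, fun i => le_refl _⟩
    · push_neg at hmin
      obtain ⟨b, hble, hbne, hbt⟩ := hmin
      have hbt' : f b = true := by
        cases hfb : f b
        · exact absurd hfb hbt
        · rfl
      have hsub : (Finset.univ.filter fun i => b i = true) ⊂
          (Finset.univ.filter fun i => x i = true) := by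
        constructor
        · intro i hi
          simp only [Finset.mem_filter, Finset.mem_univ, true_and] at hi ⊢
          have := hble i
          rw [hi] at this
          exact (Bool.le_iff_imp.mp this) rfl
        · intro hcon
          apply hbne
          funext i
          cases hxv : x i
          · have h1 := hble i
            rw [hxv] at h1
            exact bool_le_false h1
          · have h2 : i ∈ Finset.univ.filter fun i => x i = true := by simp [hxv]
            have h3 := hcon h2
            simp only [Finset.mem_filter, Finset.mem_univ, true_and] at h3
            exact h3
      have hcard : (Finset.univ.filter fun i => b i = true).card < m := by
        rw [← hm]; exact Finset.card_lt_card hsub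
      obtain ⟨p, hp, hple⟩ := ih _ hcard b hbt' rfl
      exact ⟨p, hp, fun i => le_trans (hple i) (hble i)⟩

/-- Above any false point there is a maximal false point. -/
lemma exists_maxZero_ge (x : Fin n → Bool) (hx : f x = false) :
    ∃ q, MaxZero f q ∧ ∀ i, x i ≤ q i := by
  classical
  generalize hm : (Finset.univ.filter fun i => x i = false).card = m
  induction m using Nat.strong_induction_on generalizing x with
  | _ m ih =>
    by_cases hmax : ∀ b, (∀ j, x j ≤ b j) → b ≠ x → f b = true
    · exact ⟨x, ⟨hx, hmax⟩, fun i => le_refl _⟩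
    · push_neg at hmax
      obtain ⟨b, hble, hbne, hbt⟩ := hmax
      have hbt' : f b = false := by
        cases hfb : f b
        · rfl
        · exact absurd hfb hbt
      have hsub : (Finset.univ.filter fun i => b i = false) ⊂
          (Finset.univ.filter fun i => x i = false) := by
        constructor
        · intro i hi
          simp only [Finset.mem_filter, Finset.mem_univ, true_and] at hi ⊢
          have h1 := hble i
          rw [hi] at h1
          exact Bool.eq_false_iff.mpr fun ht => by simp [ht] at h1; simpa using bool_true_le h1
        · intro hcon
          apply hbne
          funext i
          cases hxv : x i
          · have h2 : i ∈ Finset.univ.filter fun i => x i = false := by simp [hxv]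
            have h3 := hcon h2
            simp only [Finset.mem_filter, Finset.mem_univ, true_and] at h3
            exact h3
          · have h1 := hble i
            rw [hxv] at h1
            exact (bool_true_le h1)
      have hcard : (Finset.univ.filter fun i => b i = false).card < m := by
        rw [← hm]; exact Finset.card_lt_card hsub
      obtain ⟨q, hq, hqle⟩ := ih _ hcard b hbt' rfl
      exact ⟨q, hq, fun i => le_trans (hble i) (hqle i)⟩

/-- The function value only depends on the relevant coordinates. -/
lemma f_eq_of_eq_on_relevant {x y : Fin n → Bool}
    (h : ∀ j, Relevant f j → x j = y j) : f x = f y := by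
  classical
  suffices H : ∀ (s : Finset (Fin n)) (x : Fin n → Bool),
      (∀ i, x i ≠ y i → i ∈ s) → (∀ j, Relevant f j → x j = y j) → f x = f y by
    exact H Finset.univ x (fun i _ => Finset.mem_univ i) h
  intro s
  induction s using Finset.induction_on with
  | empty =>
    intro x hs _
    have : x = y := by
      funext i
      by_contra hne
      simpa using hs i hne
    rw [this]
  | @insert a s hanotin ihs =>
    intro x hs hrel
    by_cases hax : x a = y a
    · refine ihs x (fun i hi => ?_) hrel
      rcases Finset.mem_insert.mp (hs i hi) with h1 | h1
      · subst h1; exact absurd hax hi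
      · exact h1
    · have hirr : ¬ Relevant f a := fun hR => hax (hrel a hR)
      have hni : ∀ z', f (Function.update z' a false) = f (Function.update z' a true) := by
        intro z'
        by_contra hne
        exact hirr ⟨z', hne⟩
      have hboth : ∀ z b, f (Function.update z a b) = f (Function.update z a false) := by
        intro z b
        cases b
        · rfl
        · exact (hni z).symm
      have hupd : ∀ (z : Fin n → Bool) (b : Bool), f (Function.update z a b) = f z := by
        intro z b
        calc f (Function.update z a b) = f (Function.update z a false) := hboth z b
          _ = f (Function.update z a (z a)) := (hboth z (z a)).symm
          _ = f z := by rw [Function.update_eq_self]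
      have hmain := ihs (Function.update x a (y a)) (fun i hi => by
        by_cases hia : i = a
        · exfalso; subst hia; simp at hi
        · rw [Function.update_of_ne hia] at hi
          rcases Finset.mem_insert.mp (hs i hi) with h1 | h1
          · exact absurd h1 hia
          · exact h1) (fun j hj => by
        by_cases hja : j = a
        · subst hja; simp
        · rw [Function.update_of_ne hja]; exact hrel j hj)
      rw [← hmain, hupd]

lemma sum_update_toR (w : Fin n → ℝ) (x : Fin n → Bool) (j : Fin n) (b : Bool) :
    ∑ i, w i * toR (Function.update x j b) i
      = (if b then w j else 0) + ∑ i ∈ Finset.univ \ {j}, w i * toR x i := by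
  classical
  have hfun : (fun i => w i * toR (Function.update x j b) i)
      = Function.update (fun i => w i * toR x i) j (if b then w j else 0) := by
    funext i
    by_cases hij : i = j
    · subst hij
      simp only [Function.update_self, toR, Function.update_self]
      cases b <;> simp
    · simp [Function.update_of_ne hij, toR]
  calc ∑ i, w i * toR (Function.update x j b) i
      = ∑ i, Function.update (fun i => w i * toR x i) j (if b then w j else 0) i := by
        rw [← hfun]
    _ = (if b then w j else 0) + ∑ i ∈ Finset.univ \ {j}, w i * toR x i :=
        Finset.sum_update_of_mem (Finset.mem_univ j) _ _

lemma weight_pos (hpos : Positive f) {w : Fin n → ℝ} {t : ℝ}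
    (hrep : ∀ x, f x = false ↔ ∑ i, w i * toR x i ≤ t)
    {j : Fin n} (hj : Relevant f j) : 0 < w j := by
  classical
  obtain ⟨x, hx⟩ := hj
  have h01 : ∀ i, Function.update x j false i ≤ Function.update x j true i := by
    intro i
    by_cases hij : i = j
    · subst hij; simp
    · simp [Function.update_of_ne hij]
  have ht : f (Function.update x j true) = true := by
    cases h0 : f (Function.update x j false)
    · cases h1 : f (Function.update x j true)
      · exact absurd (h0.trans h1.symm) hx
      · rfl
    · exact hpos _ _ h01 h0
  have hf : f (Function.update x j false) = false := by
    cases h0 : f (Function.update x j false)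
    · rfl
    · exact absurd (h0.trans ht.symm) hx
  have hle := (hrep _).mp hf
  have hnle : ¬ (∑ i, w i * toR (Function.update x j true) i ≤ t) := by
    intro hcon
    have hb := (hrep _).mpr hcon
    rw [hb] at ht
    exact Bool.noConfusion ht
  rw [sum_update_toR] at hle hnle
  simp only [if_true, if_false] at hnle
  have hle' : ∑ i ∈ Finset.univ \ {j}, w i * toR x i ≤ t := by simpa using hle
  have h2 : t < w j + ∑ i ∈ Finset.univ \ {j}, w i * toR x i := lt_of_not_ge hnle
  linarith

lemma sum_mono_w {w : Fin n → ℝ} (hw : ∀ i, 0 ≤ w i) {x y : Fin n → Bool}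
    (h : ∀ i, x i ≤ y i) : ∑ i, w i * toR x i ≤ ∑ i, w i * toR y i :=
  Finset.sum_le_sum fun i _ => mul_le_mul_of_nonneg_left (toR_mono h i) (hw i)

lemma extremal_nonempty (hpos : Positive f) : ∃ a, MaxZero f a ∨ MinOne f a := by
  cases htop : f (fun _ => true)
  · refine ⟨fun _ => true, Or.inl ⟨htop, fun b hb hne => absurd ?_ hne⟩⟩
    funext i
    exact bool_true_le (hb i)
  · obtain ⟨p, hp, _⟩ := exists_minOne_le (f := f) (fun _ => true) htop
    exact ⟨p, Or.inr hp⟩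

end Aux

/-- A positive threshold function with `k` relevant variables has at least `k+1`
extremal points. -/
theorem extremal_count_lower_bound (n : ℕ) (f : (Fin n → Bool) → Bool)
    (hpos : Positive f) (hth : IsThreshold f) :
    {j : Fin n | Relevant f j}.ncard + 1 ≤
      {a : Fin n → Bool | MaxZero f a ∨ MinOne f a}.ncard := by
  classical
  set R : Set (Fin n) := {j : Fin n | Relevant f j} with hRdef
  set E : Set (Fin n → Bool) := {a : Fin n → Bool | MaxZero f a ∨ MinOne f a} with hEdef
  haveI : Fintype ↥R := Fintype.ofFinite ↥R
  haveI : Fintype ↥E := Fintype.ofFinite ↥E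
  obtain ⟨w, t, hw⟩ := hth
  set w₀ : Fin n → ℝ := fun i => if Relevant f i then w i else 0 with hw₀def
  have hrep₀ : ∀ x, f x = false ↔ ∑ i, w₀ i * toR x i ≤ t := by
    intro x
    have hmask : f x = f (fun i => if Relevant f i then x i else false) :=
      f_eq_of_eq_on_relevant (fun j hj => by simp [hj])
    have hsum : ∑ i, w₀ i * toR x i
        = ∑ i, w i * toR (fun i => if Relevant f i then x i else false) i := by
      apply Finset.sum_congr rfl
      intro i _
      by_cases hi : Relevant f i <;> simp [w₀, toR, hi]
    rw [hmask, hsum]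
    exact hw _
  have hw₀pos : ∀ j, Relevant f j → 0 < w₀ j := fun j hj => by
    have := weight_pos hpos hrep₀ hj
    exact this
  have hw₀irr : ∀ i, ¬ Relevant f i → w₀ i = 0 := fun i hi => if_neg hi
  -- key step: no orthogonal functional with a negative coordinate
  have key : ∀ (v : ↥R → ℝ) (c : ℝ),
      (∀ a : ↥E, ∑ j : ↥R, v j * toR a.1 j.1 = c) → ∀ j : ↥R, ¬ v j < 0 := by
    intro v c hv j hjneg
    set vh : Fin n → ℝ := fun i => if h : Relevant f i then v ⟨i, h⟩ else 0 with hvhdef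
    have hvs : ∀ a : Fin n → Bool, ∑ i, vh i * toR a i = ∑ j : ↥R, v j * toR a j.1 := by
      intro a
      rw [← Finset.sum_filter_add_sum_filter_not Finset.univ (fun i => Relevant f i)
        (fun i => vh i * toR a i)]
      have h2 : ∑ i ∈ Finset.univ.filter (fun i => ¬ Relevant f i), vh i * toR a i = 0 := by
        apply Finset.sum_eq_zero
        intro i hi
        simp only [Finset.mem_filter] at hi
        simp [vh, dif_neg hi.2]
      rw [h2, add_zero]
      rw [Finset.sum_subtype (p := fun i => i ∈ R)
        (Finset.univ.filter (fun i => Relevant f i))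
        (by intro x
            simp only [Finset.mem_filter, Finset.mem_univ, true_and, hRdef,
              Set.mem_setOf_eq]) (fun i => vh i * toR a i)]
      apply Finset.sum_congr rfl
      intro j' _
      have hj' : Relevant f j'.1 := j'.2
      simp [vh, dif_pos hj']
    set N : Finset ↥R := Finset.univ.filter (fun j : ↥R => v j < 0) with hNdef
    have hjN : j ∈ N := by simp [N, hjneg]
    obtain ⟨j0, hj0N, hj0min⟩ :=
      Finset.exists_min_image N (fun j : ↥R => w₀ j.1 / (- v j)) ⟨j, hjN⟩
    have hj0neg : v j0 < 0 := by simpa [N] using hj0N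
    have hj0rel : Relevant f j0.1 := j0.2
    set ε : ℝ := w₀ j0.1 / (- v j0) with hεdef
    have hε0 : 0 ≤ ε := div_nonneg (le_of_lt (hw₀pos _ hj0rel)) (by linarith)
    set w' : Fin n → ℝ := fun i => w₀ i + ε * vh i with hw'def
    have hw'nonneg : ∀ i, 0 ≤ w' i := by
      intro i
      by_cases hi : Relevant f i
      · by_cases hneg : v ⟨i, hi⟩ < 0
        · have hmem : (⟨i, hi⟩ : ↥R) ∈ N := by simp [N, hneg]
          have hle := hj0min _ hmem
          have h3 : ε * (- v ⟨i, hi⟩) ≤ w₀ i := by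
            rw [← le_div_iff₀ (by linarith : (0:ℝ) < - v ⟨i, hi⟩)]
            exact hle
          simp only [w', vh, dif_pos hi]
          nlinarith
        · push_neg at hneg
          have h4 := hw₀pos i hi
          simp only [w', vh, dif_pos hi]
          nlinarith [mul_nonneg hε0 hneg]
      · simp [w', vh, dif_neg hi, hw₀irr i hi]
    have hj0zero : w' j0.1 = 0 := by
      have h5 : ε * (- v j0) = w₀ j0.1 :=
        div_mul_cancel₀ _ (ne_of_gt (by linarith : (0:ℝ) < - v j0))
      have h6 : vh j0.1 = v j0 := by
        simp only [vh, dif_pos hj0rel]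
      simp only [w', h6]
      linarith
    set t' : ℝ := t + ε * c with ht'def
    have hslack : ∀ a : Fin n → Bool, (MaxZero f a ∨ MinOne f a) →
        ∑ i, w' i * toR a i = (∑ i, w₀ i * toR a i) + ε * c := by
      intro a ha
      have h7 : ∑ i, w' i * toR a i
          = ∑ i, w₀ i * toR a i + ε * ∑ i, vh i * toR a i := by
        rw [Finset.mul_sum, ← Finset.sum_add_distrib]
        apply Finset.sum_congr rfl
        intro i _
        simp only [w']
        ring
      rw [h7, hvs, hv ⟨a, ha⟩]
    have hrep' : ∀ x, f x = false ↔ ∑ i, w' i * toR x i ≤ t' := by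
      intro x
      constructor
      · intro hx
        obtain ⟨q, hq, hxq⟩ := exists_maxZero_ge x hx
        have h1 : ∑ i, w' i * toR x i ≤ ∑ i, w' i * toR q i := sum_mono_w hw'nonneg hxq
        have h2 := hslack q (Or.inl hq)
        have h3 : ∑ i, w₀ i * toR q i ≤ t := (hrep₀ q).mp hq.1
        rw [ht'def]
        linarith
      · intro hx
        cases hfx : f x
        · rfl
        · exfalso
          obtain ⟨p, hp, hpx⟩ := exists_minOne_le x hfx
          have h1 : ∑ i, w' i * toR p i ≤ ∑ i, w' i * toR x i := sum_mono_w hw'nonneg hpx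
          have h2 := hslack p (Or.inr hp)
          have h3 : ¬ (∑ i, w₀ i * toR p i ≤ t) := by
            intro hcon
            have hb := (hrep₀ p).mpr hcon
            rw [hp.1] at hb
            exact Bool.noConfusion hb
          have h4 : t < ∑ i, w₀ i * toR p i := lt_of_not_ge h3
          rw [ht'def] at hx
          linarith
    have hwp := weight_pos hpos hrep' hj0rel
    rw [hj0zero] at hwp
    exact lt_irrefl _ hwp
  -- any orthogonal functional vanishes
  have main : ∀ vc : (↥R → ℝ) × ℝ,
      (∀ a : ↥E, (∑ j : ↥R, vc.1 j * toR a.1 j.1) - vc.2 = 0) → vc = 0 := by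
    rintro ⟨v, c⟩ hvc
    have hv : ∀ a : ↥E, ∑ j : ↥R, v j * toR a.1 j.1 = c := by
      intro a
      have := hvc a
      linarith [this]
    have hv0 : v = 0 := by
      funext j
      by_contra hj
      rcases lt_or_gt_of_ne hj with hlt | hgt
      · exact key v c hv j hlt
      · refine key (-v) (-c) (fun a => ?_) j (by simpa using hgt)
        have := hv a
        simp only [Pi.neg_apply, neg_mul]
        rw [Finset.sum_neg_distrib, this]
    subst hv0
    have hc : c = 0 := by
      obtain ⟨a, ha⟩ := extremal_nonempty (f := f) hpos
      have := hv ⟨a, ha⟩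
      simpa using this.symm
    rw [hc]
    rfl
  -- linear algebra
  let T : ((↥R → ℝ) × ℝ) →ₗ[ℝ] (↥E → ℝ) :=
    { toFun := fun vc a => (∑ j : ↥R, vc.1 j * toR a.1 j.1) - vc.2
      map_add' := by
        intro u v'
        funext a
        simp only [Prod.fst_add, Prod.snd_add, Pi.add_apply, add_mul,
          Finset.sum_add_distrib]
        ring
      map_smul' := by
        intro r v'
        funext a
        simp only [Prod.smul_fst, Prod.smul_snd, Pi.smul_apply, smul_eq_mul,
          RingHom.id_apply]
        have hss : ∑ j : ↥R, r * v'.1 j * toR a.1 j.1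
            = ∑ j : ↥R, r * (v'.1 j * toR a.1 j.1) :=
          Finset.sum_congr rfl (fun j' _ => by ring)
        rw [hss, ← Finset.mul_sum, mul_sub] }
  have hinj : Function.Injective T := by
    rw [injective_iff_map_eq_zero]
    intro vc hvc
    exact main vc (fun a => congrFun hvc a)
  have hrank := LinearMap.finrank_le_finrank_of_injective hinj
  have h1 : Module.finrank ℝ ((↥R → ℝ) × ℝ) = Fintype.card ↥R + 1 := by
    rw [Module.finrank_prod, Module.finrank_pi, Module.finrank_self]
  have h2 : Module.finrank ℝ (↥E → ℝ) = Fintype.card ↥E := Module.finrank_pi ℝ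
  have hcard : Fintype.card ↥R + 1 ≤ Fintype.card ↥E := by
    rw [← h1, ← h2]
    exact hrank
  have e1 : R.ncard = Fintype.card ↥R := by
    rw [Set.ncard_eq_toFinset_card', Set.toFinset_card]
  have e2 : E.ncard = Fintype.card ↥E := by
    rw [Set.ncard_eq_toFinset_card', Set.toFinset_card]
  rw [e1, e2]
  exact hcard
end

section
/- Let f be a positive threshold Boolean function on {0,1}^n with k relevant variables. Then f has exactly k+1 extremal points if and only if f is linear read-once. -/
/-- Nested formulas over `n` variables: a literal (`lit true i` is `xᵢ`,
`lit false i` is `¬xᵢ`), or a literal combined with a nested formula by `∨` or `∧`. -/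
inductive NF (n : ℕ) : Type
  | lit (b : Bool) (i : Fin n) : NF n
  | orF (b : Bool) (i : Fin n) (t : NF n) : NF n
  | andF (b : Bool) (i : Fin n) (t : NF n) : NF n

/-- Evaluation of a nested formula at a point. -/
def NF.eval {n : ℕ} : NF n → (Fin n → Bool) → Bool
  | NF.lit b i, x => if b then x i else !(x i)
  | NF.orF b i t, x => (if b then x i else !(x i)) || t.eval x
  | NF.andF b i t, x => (if b then x i else !(x i)) && t.eval x

/-- The variable `j` occurs in the formula. -/
def NF.Mem {n : ℕ} (j : Fin n) : NF n → Prop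
  | NF.lit _ i => j = i
  | NF.orF _ i t => j = i ∨ NF.Mem j t
  | NF.andF _ i t => j = i ∨ NF.Mem j t

/-- Well-formedness of a nested formula: the outermost variable does not occur
in the subformula. -/
def NF.WF {n : ℕ} : NF n → Prop
  | NF.lit _ _ => True
  | NF.orF _ i t => ¬ NF.Mem i t ∧ t.WF
  | NF.andF _ i t => ¬ NF.Mem i t ∧ t.WF

/-- A Boolean function is linear read-once if it is constant or representable
by a nested formula. -/
def LinearReadOnce {n : ℕ} (f : (Fin n → Bool) → Bool) : Prop :=
  (∃ c, ∀ x, f x = c) ∨ ∃ φ : NF n, φ.WF ∧ ∀ x, f x = φ.eval x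


namespace LROAux

variable {n : ℕ}

lemma ble_false {b : Bool} (h : b ≤ false) : b = false := by
  cases b
  · rfl
  · exact absurd h (by decide)

lemma ble_true {b : Bool} (h : true ≤ b) : b = true := by
  cases b
  · exact absurd h (by decide)
  · rfl

lemma upd_apply (x : Fin n → Bool) (i : Fin n) (c : Bool) (j : Fin n) :
    Function.update x i c j = if j = i then c else x j := Function.update_apply x i c j

lemma upd_self (x : Fin n → Bool) (i : Fin n) {c : Bool} (h : x i = c) :
    Function.update x i c = x := by rw [← h]; exact Function.update_eq_self i x

lemma upd_le_of_le {x y : Fin n → Bool} (i : Fin n) (c : Bool) (h : ∀ j, x j ≤ y j) :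
    ∀ j, Function.update x i c j ≤ Function.update y i c j := by
  intro j; rw [upd_apply, upd_apply]; by_cases hj : j = i <;> simp [hj, h j]

lemma upd_false_le (x : Fin n → Bool) (i : Fin n) :
    ∀ j, Function.update x i false j ≤ x j := by
  intro j; rw [upd_apply]; by_cases hj : j = i <;> simp [hj]

lemma le_upd_true (x : Fin n → Bool) (i : Fin n) :
    ∀ j, x j ≤ Function.update x i true j := by
  intro j; rw [upd_apply]; by_cases hj : j = i <;> simp [hj]

lemma pos_false {f : (Fin n → Bool) → Bool} (hpos : Positive f) {x y : Fin n → Bool}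
    (h : ∀ j, x j ≤ y j) (hy : f y = false) : f x = false := by
  cases hx : f x
  · rfl
  · rw [hpos x y h hx] at hy; exact hy.symm ▸ (by simp at hy)

/-- an irrelevant variable can be updated freely -/
lemma irrel_update {f : (Fin n → Bool) → Bool} {j : Fin n} (h : ¬ Relevant f j)
    (x : Fin n → Bool) (c : Bool) : f (Function.update x j c) = f x := by
  have h2 : f (Function.update x j false) = f (Function.update x j true) := by
    by_contra hne; exact h ⟨x, hne⟩
  cases hxj : x j
  · have e : Function.update x j false = x := upd_self x j hxj
    cases c
    · rw [e]
    · rw [← h2, e]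
  · have e : Function.update x j true = x := upd_self x j hxj
    cases c
    · rw [h2, e]
    · rw [e]

/-- a function only depends on its relevant variables -/
lemma eq_on_rel (f : (Fin n → Bool) → Bool) :
    ∀ x y : Fin n → Bool, (∀ j, Relevant f j → x j = y j) → f x = f y := by
  suffices h : ∀ s : Finset (Fin n), ∀ x y : Fin n → Bool,
      (∀ j, j ∉ s → x j = y j) → (∀ j, Relevant f j → x j = y j) → f x = f y by
    intro x y h'
    exact h Finset.univ x y (fun j hj => absurd (Finset.mem_univ j) hj) h'
  intro s
  induction s using Finset.induction_on with
  | empty =>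
    intro x y hout _
    have : x = y := funext fun j => hout j (Finset.notMem_empty j)
    rw [this]
  | @insert a s ha ih =>
    intro x y hout hrel
    set y' := Function.update y a (x a) with hy'
    have h1 : f x = f y' := by
      refine ih x y' (fun j hj => ?_) (fun j hr => ?_)
      · by_cases hja : j = a
        · subst hja; simp [hy']
        · rw [hy', upd_apply]; simp only [hja, if_false]
          exact hout j (by simp [hja, hj])
      · by_cases hja : j = a
        · subst hja; simp [hy']
        · rw [hy', upd_apply]; simp only [hja, if_false]; exact hrel j hr
    have h2 : f y' = f y := by
      by_cases hxa : x a = y a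
      · rw [hy', hxa, Function.update_eq_self]
      · have hnr : ¬ Relevant f a := fun hr => hxa (hrel a hr)
        exact irrel_update hnr y (x a)
    rw [h1, h2]

lemma const_of_no_rel {f : (Fin n → Bool) → Bool} (h : ∀ j, ¬ Relevant f j) :
    ∀ x, f x = f (fun _ => false) := by
  intro x; exact eq_on_rel f x _ (fun j hj => absurd hj (h j))

lemma pos_rel_witness {f : (Fin n → Bool) → Bool} (hpos : Positive f) {j : Fin n}
    (hj : Relevant f j) :
    ∃ x, f (Function.update x j false) = false ∧ f (Function.update x j true) = true := by
  obtain ⟨x, hx⟩ := hj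
  have hle : ∀ l, Function.update x j false l ≤ Function.update x j true l := by
    intro l; rw [upd_apply, upd_apply]; by_cases hl : l = j <;> simp [hl]
  cases hf0 : f (Function.update x j false)
  · cases hf1 : f (Function.update x j true)
    · exact absurd (hf0.trans hf1.symm) hx
    · exact ⟨x, hf0, hf1⟩
  · have := hpos _ _ hle hf0
    exact absurd (hf0.trans this.symm) hx

end LROAux

namespace LROAux

variable {n : ℕ}

/-- eval only depends on variables occurring in the formula -/
lemma eval_update_of_not_mem (φ : NF n) {j : Fin n} (h : ¬ NF.Mem j φ)
    (x : Fin n → Bool) (c : Bool) : φ.eval (Function.update x j c) = φ.eval x := by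
  induction φ with
  | lit b i =>
    have hji : j ≠ i := h
    simp [NF.eval, upd_apply, Ne.symm hji]
  | orF b i t ih =>
    have hji : j ≠ i := fun e => h (Or.inl e)
    have hm : ¬ NF.Mem j t := fun m => h (Or.inr m)
    simp [NF.eval, upd_apply, Ne.symm hji, ih hm]
  | andF b i t ih =>
    have hji : j ≠ i := fun e => h (Or.inl e)
    have hm : ¬ NF.Mem j t := fun m => h (Or.inr m)
    simp [NF.eval, upd_apply, Ne.symm hji, ih hm]

/-- a well-formed formula is non-constant -/
lemma wf_nonconst (φ : NF n) (hwf : φ.WF) :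
    (∃ x, φ.eval x = false) ∧ (∃ x, φ.eval x = true) := by
  induction φ with
  | lit b i =>
    constructor
    · exact ⟨fun _ => !b, by cases b <;> simp [NF.eval]⟩
    · exact ⟨fun _ => b, by cases b <;> simp [NF.eval]⟩
  | orF b i t ih =>
    obtain ⟨hmem, hwt⟩ := hwf
    obtain ⟨⟨x0, hx0⟩, _⟩ := ih hwt
    constructor
    · refine ⟨Function.update x0 i (!b), ?_⟩
      cases b <;> simp [NF.eval, eval_update_of_not_mem t hmem, hx0]
    · refine ⟨Function.update x0 i b, ?_⟩
      cases b <;> simp [NF.eval]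
  | andF b i t ih =>
    obtain ⟨hmem, hwt⟩ := hwf
    obtain ⟨_, ⟨x1, hx1⟩⟩ := ih hwt
    constructor
    · refine ⟨Function.update x1 i (!b), ?_⟩
      cases b <;> simp [NF.eval]
    · refine ⟨Function.update x1 i b, ?_⟩
      cases b <;> simp [NF.eval, eval_update_of_not_mem t hmem, hx1]

/-- extremal points of constant functions -/
lemma ext_const_false {f : (Fin n → Bool) → Bool} (h : ∀ x, f x = false) :
    {a : Fin n → Bool | MaxZero f a ∨ MinOne f a} = {fun _ => true} := by
  ext a
  simp only [Set.mem_setOf_eq, Set.mem_singleton_iff]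
  constructor
  · rintro (⟨_, hmax⟩ | ⟨ht, _⟩)
    · by_contra hne
      have := hmax (fun _ => true) (fun j => Bool.le_true _) (fun e => hne e.symm)
      rw [h] at this; simp at this
    · rw [h] at ht; exact absurd ht (by simp)
  · rintro rfl
    left
    exact ⟨h _, fun b hb hne => by
      exact absurd (funext fun j => ble_true (by simpa using hb j)) hne⟩

lemma ext_const_true {f : (Fin n → Bool) → Bool} (h : ∀ x, f x = true) :
    {a : Fin n → Bool | MaxZero f a ∨ MinOne f a} = {fun _ => false} := by
  ext a
  simp only [Set.mem_setOf_eq, Set.mem_singleton_iff]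
  constructor
  · rintro (⟨hf, _⟩ | ⟨_, hmin⟩)
    · rw [h] at hf; exact absurd hf (by simp)
    · by_contra hne
      have := hmin (fun _ => false) (fun j => Bool.false_le _) (fun e => hne e.symm)
      rw [h] at this; simp at this
  · rintro rfl
    right
    exact ⟨h _, fun b hb hne => by
      exact absurd (funext fun j => ble_false (by simpa using hb j)) hne⟩

lemma ext_const_ncard {f : (Fin n → Bool) → Bool} {c : Bool} (h : ∀ x, f x = c) :
    {a : Fin n → Bool | MaxZero f a ∨ MinOne f a}.ncard = 1 := by
  cases c
  · rw [ext_const_false h]; exact Set.ncard_singleton _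
  · rw [ext_const_true h]; exact Set.ncard_singleton _

lemma rel_const_empty {f : (Fin n → Bool) → Bool} {c : Bool} (h : ∀ x, f x = c) :
    {j : Fin n | Relevant f j} = ∅ := by
  ext j; simp only [Set.mem_setOf_eq, Set.mem_empty_iff_false, iff_false]
  rintro ⟨x, hx⟩; exact hx ((h _).trans (h _).symm)

end LROAux

namespace LROAux

variable {n : ℕ}

/-- restriction of `f` with variable `i` fixed to `c` -/
def res (f : (Fin n → Bool) → Bool) (i : Fin n) (c : Bool) : (Fin n → Bool) → Bool :=
  fun x => f (Function.update x i c)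

lemma res_update (f : (Fin n → Bool) → Bool) (i : Fin n) (c c' : Bool) (x : Fin n → Bool) :
    res f i c (Function.update x i c') = res f i c x := by
  simp only [res, Function.update_idem]

lemma res_pos {f : (Fin n → Bool) → Bool} (hpos : Positive f) (i : Fin n) (c : Bool) :
    Positive (res f i c) := by
  intro x y h hx
  exact hpos _ _ (upd_le_of_le i c h) hx

lemma res_not_rel (f : (Fin n → Bool) → Bool) (i : Fin n) (c : Bool) :
    ¬ Relevant (res f i c) i := by
  rintro ⟨x, hx⟩
  exact hx ((res_update f i c false x).trans (res_update f i c true x).symm)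

lemma rel_res_rel {f : (Fin n → Bool) → Bool} {i : Fin n} {c : Bool} {j : Fin n}
    (h : Relevant (res f i c) j) : Relevant f j := by
  obtain ⟨x, hx⟩ := h
  have hji : j ≠ i := by
    rintro rfl; exact res_not_rel f _ c ⟨x, hx⟩
  refine ⟨Function.update x i c, fun e => hx ?_⟩
  simp only [res]
  rw [Function.update_comm hji, Function.update_comm hji]
  exact e

lemma rel_of_rel_ne {f : (Fin n → Bool) → Bool} {i j : Fin n} (hj : Relevant f j)
    (hne : j ≠ i) : Relevant (res f i false) j ∨ Relevant (res f i true) j := by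
  obtain ⟨x, hx⟩ := hj
  cases hxi : x i
  · left
    refine ⟨x, ?_⟩
    simp only [res]
    rw [Function.update_comm hne, Function.update_comm hne true false x,
      upd_self x i hxi]
    exact hx
  · right
    refine ⟨x, ?_⟩
    simp only [res]
    rw [Function.update_comm hne, Function.update_comm hne true true x,
      upd_self x i hxi]
    exact hx

lemma mt_res_coord {f : (Fin n → Bool) → Bool} {i : Fin n} {c : Bool} {a : Fin n → Bool}
    (h : MinOne (res f i c) a) : a i = false := by
  by_contra hne
  have hi : a i = true := by revert hne; cases a i <;> simp
  have h1 : Function.update a i false ≠ a := by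
    intro e; have := congrFun e i; rw [upd_apply] at this; simp [hi] at this
  have := h.2 (Function.update a i false) (upd_false_le a i) h1
  rw [res_update] at this
  rw [h.1] at this; exact Bool.noConfusion this

lemma mz_res_coord {f : (Fin n → Bool) → Bool} {i : Fin n} {c : Bool} {b : Fin n → Bool}
    (h : MaxZero (res f i c) b) : b i = true := by
  by_contra hne
  have hi : b i = false := by revert hne; cases b i <;> simp
  have h1 : Function.update b i true ≠ b := by
    intro e; have := congrFun e i; rw [upd_apply] at this; simp [hi] at this
  have := h.2 (Function.update b i true) (le_upd_true b i) h1
  rw [res_update] at this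
  rw [h.1] at this; exact Bool.noConfusion this

end LROAux

namespace LROAux

variable {n : ℕ}

lemma char_MT {f : (Fin n → Bool) → Bool} (hpos : Positive f) (i : Fin n) :
    {a | MinOne f a} = {a | MinOne (res f i false) a} ∪
      (fun a => Function.update a i true) ''
        {a | MinOne (res f i true) a ∧ res f i false a = false} := by
  ext a
  simp only [Set.mem_setOf_eq, Set.mem_union, Set.mem_image]
  constructor
  · rintro ⟨hT, hmin⟩
    cases hi : a i
    · left
      refine ⟨?_, ?_⟩
      · show f (Function.update a i false) = true
        rw [upd_self a i hi]; exact hT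
      · intro b hb hne
        have hbi : b i = false := ble_false (hi ▸ hb i)
        show f (Function.update b i false) = false
        rw [upd_self b i hbi]; exact hmin b hb hne
    · right
      refine ⟨Function.update a i false, ⟨⟨?_, ?_⟩, ?_⟩, ?_⟩
      · show f (Function.update (Function.update a i false) i true) = true
        simp only [Function.update_idem]
        rw [upd_self a i hi]; exact hT
      · intro b hb hne
        have key : ∀ j, Function.update b i true j ≤ a j := by
          intro j; rw [upd_apply]
          by_cases hj : j = i
          · subst hj; simp [hi]
          · simp only [hj, if_false]
            have := hb j; rwa [upd_apply, if_neg hj] at this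
        have hbi : b i = false := ble_false (by simpa [upd_apply] using hb i)
        have hne2 : Function.update b i true ≠ a := by
          intro e
          apply hne
          funext j
          by_cases hj : j = i
          · subst hj; rw [upd_apply, if_pos rfl]; exact hbi
          · have h3 := congrFun e j
            rw [upd_apply, if_neg hj] at h3
            rw [upd_apply, if_neg hj]; exact h3
        exact hmin _ key hne2
      · show f (Function.update (Function.update a i false) i false) = false
        simp only [Function.update_idem]
        apply hmin _ (upd_false_le a i)
        intro e; have := congrFun e i; rw [upd_apply, if_pos rfl, hi] at this
        exact Bool.noConfusion this
      · simp only [Function.update_idem]; exact upd_self a i hi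
  · rintro (⟨hT, hmin⟩ | ⟨a', ⟨⟨hT, hmin⟩, hg0⟩, rfl⟩)
    · have hi : a i = false := mt_res_coord ⟨hT, hmin⟩
      refine ⟨?_, ?_⟩
      · have h1 : f (Function.update a i false) = true := hT
        rwa [upd_self a i hi] at h1
      · intro b hb hne
        have hbi : b i = false := ble_false (hi ▸ hb i)
        have h1 : f (Function.update b i false) = false := hmin b hb hne
        rwa [upd_self b i hbi] at h1
    · have hi' : a' i = false := mt_res_coord ⟨hT, hmin⟩
      refine ⟨hT, ?_⟩
      intro b hb hne
      cases hbi : b i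
      · have hba' : ∀ j, b j ≤ a' j := by
          intro j
          by_cases hj : j = i
          · subst hj; rw [hbi, hi']
          · have := hb j; rwa [upd_apply, if_neg hj] at this
        by_cases hbe : b = a'
        · subst hbe
          have h1 : f (Function.update b i false) = false := hg0
          rwa [upd_self b i hbi] at h1
        · have h1 : f (Function.update b i true) = false := hmin b hba' hbe
          exact pos_false hpos (le_upd_true b i) h1
      · have hb'a : ∀ j, Function.update b i false j ≤ a' j := by
          intro j; rw [upd_apply]
          by_cases hj : j = i
          · subst hj; simp [hi']
          · simp only [hj, if_false]
            have := hb j; rwa [upd_apply, if_neg hj] at this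
        have hb'ne : Function.update b i false ≠ a' := by
          intro e
          apply hne
          have hb2 : b = Function.update (Function.update b i false) i true := by
            simp only [Function.update_idem]; exact (upd_self b i hbi).symm
          rw [hb2, e]
        have h1 : f (Function.update (Function.update b i false) i true) = false :=
          hmin _ hb'a hb'ne
        simp only [Function.update_idem] at h1
        rwa [upd_self b i hbi] at h1

lemma char_MF {f : (Fin n → Bool) → Bool} (hpos : Positive f) (i : Fin n) :
    {b | MaxZero f b} = {b | MaxZero (res f i true) b} ∪
      (fun b => Function.update b i false) ''
        {b | MaxZero (res f i false) b ∧ res f i true b = true} := by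
  ext b
  simp only [Set.mem_setOf_eq, Set.mem_union, Set.mem_image]
  constructor
  · rintro ⟨hF, hmax⟩
    cases hi : b i
    · right
      refine ⟨Function.update b i true, ⟨⟨?_, ?_⟩, ?_⟩, ?_⟩
      · show f (Function.update (Function.update b i true) i false) = false
        simp only [Function.update_idem]
        rw [upd_self b i hi]; exact hF
      · intro c hc hne
        have key : ∀ j, b j ≤ Function.update c i false j := by
          intro j; rw [upd_apply]
          by_cases hj : j = i
          · subst hj; simp [hi]
          · simp only [hj, if_false]
            have := hc j; rwa [upd_apply, if_neg hj] at this
        have hci : c i = true := ble_true (by simpa [upd_apply] using hc i)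
        have hne2 : Function.update c i false ≠ b := by
          intro e
          apply hne
          funext j
          by_cases hj : j = i
          · subst hj; rw [upd_apply, if_pos rfl]; exact hci
          · have h3 := congrFun e j
            rw [upd_apply, if_neg hj] at h3
            rw [upd_apply, if_neg hj]; exact h3
        exact hmax _ key hne2
      · show f (Function.update (Function.update b i true) i true) = true
        simp only [Function.update_idem]
        apply hmax _ (le_upd_true b i)
        intro e; have := congrFun e i; rw [upd_apply, if_pos rfl, hi] at this
        exact Bool.noConfusion this
      · simp only [Function.update_idem]; exact upd_self b i hi
    · left
      refine ⟨?_, ?_⟩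
      · show f (Function.update b i true) = false
        rw [upd_self b i hi]; exact hF
      · intro c hc hne
        have hci : c i = true := ble_true (hi ▸ hc i)
        show f (Function.update c i true) = true
        rw [upd_self c i hci]; exact hmax c hc hne
  · rintro (⟨hF, hmax⟩ | ⟨b', ⟨⟨hF, hmax⟩, hg1⟩, rfl⟩)
    · have hi : b i = true := mz_res_coord ⟨hF, hmax⟩
      refine ⟨?_, ?_⟩
      · have h1 : f (Function.update b i true) = false := hF
        rwa [upd_self b i hi] at h1
      · intro c hc hne
        have hci : c i = true := ble_true (hi ▸ hc i)
        have h1 : f (Function.update c i true) = true := hmax c hc hne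
        rwa [upd_self c i hci] at h1
    · have hi' : b' i = true := mz_res_coord ⟨hF, hmax⟩
      refine ⟨hF, ?_⟩
      intro c hc hne
      cases hci : c i
      · have hcb : ∀ j, b' j ≤ Function.update c i true j := by
          intro j; rw [upd_apply]
          by_cases hj : j = i
          · subst hj; simp
          · simp only [hj, if_false]
            have := hc j; rwa [upd_apply, if_neg hj] at this
        have hcne : Function.update c i true ≠ b' := by
          intro e
          apply hne
          have hc2 : c = Function.update (Function.update c i true) i false := by
            simp only [Function.update_idem]; exact (upd_self c i hci).symm
          rw [hc2, e]
        have h1 : f (Function.update (Function.update c i true) i false) = true :=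
          hmax _ hcb hcne
        simp only [Function.update_idem] at h1
        rwa [upd_self c i hci] at h1
      · have hcb : ∀ j, b' j ≤ c j := by
          intro j
          by_cases hj : j = i
          · subst hj; rw [hci, hi']
          · have := hc j; rwa [upd_apply, if_neg hj] at this
        by_cases hce : c = b'
        · subst hce
          have h1 : f (Function.update c i true) = true := hg1
          rwa [upd_self c i hci] at h1
        · have h1 : f (Function.update c i false) = true := hmax c hcb hce
          exact hpos _ _ (upd_false_le c i) h1


end LROAux

namespace LROAux

variable {n : ℕ}

lemma ext_eq_union (f : (Fin n → Bool) → Bool) :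
    {a : Fin n → Bool | MaxZero f a ∨ MinOne f a} =
      {a | MaxZero f a} ∪ {a | MinOne f a} := rfl

lemma mtmf_disjoint (f : (Fin n → Bool) → Bool) :
    Disjoint {a : Fin n → Bool | MaxZero f a} {a | MinOne f a} := by
  rw [Set.disjoint_left]
  rintro a ⟨hF, _⟩ ⟨hT, _⟩
  rw [hF] at hT; exact Bool.noConfusion hT

lemma upd_injOn_false (i : Fin n) {s : Set (Fin n → Bool)} (h : ∀ a ∈ s, a i = false) :
    Set.InjOn (fun a => Function.update a i true) s := by
  intro a ha b hb e
  funext j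
  by_cases hj : j = i
  · subst hj; rw [h a ha, h b hb]
  · have := congrFun e j
    simp only [upd_apply, if_neg hj] at this
    exact this

lemma upd_injOn_true (i : Fin n) {s : Set (Fin n → Bool)} (h : ∀ a ∈ s, a i = true) :
    Set.InjOn (fun a => Function.update a i false) s := by
  intro a ha b hb e
  funext j
  by_cases hj : j = i
  · subst hj; rw [h a ha, h b hb]
  · have := congrFun e j
    simp only [upd_apply, if_neg hj] at this
    exact this

lemma mt_ncard_split {f : (Fin n → Bool) → Bool} (hpos : Positive f) (i : Fin n) :
    {a | MinOne f a}.ncard = {a | MinOne (res f i false) a}.ncard +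
      {a | MinOne (res f i true) a ∧ res f i false a = false}.ncard := by
  rw [char_MT hpos i]
  rw [Set.ncard_union_eq ?_ (Set.toFinite _) (Set.toFinite _)]
  · congr 1
    exact Set.ncard_image_of_injOn (upd_injOn_false i (fun a ha => mt_res_coord ha.1))
  · rw [Set.disjoint_left]
    rintro a ha ⟨a', _, rfl⟩
    have h1 : a' i = false := mt_res_coord ‹MinOne (res f i true) a' ∧ _›.1
    have h2 := mt_res_coord (ha : MinOne (res f i false) _)
    simp only [upd_apply, if_pos rfl] at h2
    exact Bool.noConfusion h2

lemma mf_ncard_split {f : (Fin n → Bool) → Bool} (hpos : Positive f) (i : Fin n) :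
    {b | MaxZero f b}.ncard = {b | MaxZero (res f i true) b}.ncard +
      {b | MaxZero (res f i false) b ∧ res f i true b = true}.ncard := by
  rw [char_MF hpos i]
  rw [Set.ncard_union_eq ?_ (Set.toFinite _) (Set.toFinite _)]
  · congr 1
    exact Set.ncard_image_of_injOn (upd_injOn_true i (fun b hb => mz_res_coord hb.1))
  · rw [Set.disjoint_left]
    rintro b hb ⟨b', _, rfl⟩
    have h2 := mz_res_coord (hb : MaxZero (res f i true) _)
    simp only [upd_apply, if_pos rfl] at h2
    exact Bool.noConfusion h2

lemma ext_ncard_eq (f : (Fin n → Bool) → Bool) :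
    {a : Fin n → Bool | MaxZero f a ∨ MinOne f a}.ncard =
      {a | MaxZero f a}.ncard + {a | MinOne f a}.ncard := by
  rw [ext_eq_union f, Set.ncard_union_eq (mtmf_disjoint f) (Set.toFinite _) (Set.toFinite _)]

end LROAux

namespace LROAux

variable {n : ℕ}

lemma minone_const_true {f : (Fin n → Bool) → Bool} (h : ∀ x, f x = true) :
    {a : Fin n → Bool | MinOne f a} = {fun _ => false} := by
  ext a
  simp only [Set.mem_setOf_eq, Set.mem_singleton_iff]
  constructor
  · rintro ⟨_, hmin⟩
    by_contra hne
    have := hmin (fun _ => false) (fun j => Bool.false_le _) (fun e => hne e.symm)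
    rw [h] at this; exact Bool.noConfusion this
  · rintro rfl
    exact ⟨h _, fun b hb hne =>
      absurd (funext fun j => ble_false (by simpa using hb j)) hne⟩

lemma maxzero_const_true {f : (Fin n → Bool) → Bool} (h : ∀ x, f x = true) :
    {b : Fin n → Bool | MaxZero f b} = ∅ := by
  ext b
  simp only [Set.mem_setOf_eq, Set.mem_empty_iff_false, iff_false]
  rintro ⟨hF, _⟩; rw [h] at hF; exact Bool.noConfusion hF

lemma maxzero_const_false {f : (Fin n → Bool) → Bool} (h : ∀ x, f x = false) :
    {b : Fin n → Bool | MaxZero f b} = {fun _ => true} := by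
  ext b
  simp only [Set.mem_setOf_eq, Set.mem_singleton_iff]
  constructor
  · rintro ⟨_, hmax⟩
    by_contra hne
    have := hmax (fun _ => true) (fun j => Bool.le_true _) (fun e => hne e.symm)
    rw [h] at this; exact Bool.noConfusion this
  · rintro rfl
    exact ⟨h _, fun b hb hne =>
      absurd (funext fun j => ble_true (by simpa using hb j)) hne⟩

lemma minone_const_false {f : (Fin n → Bool) → Bool} (h : ∀ x, f x = false) :
    {a : Fin n → Bool | MinOne f a} = ∅ := by
  ext a
  simp only [Set.mem_setOf_eq, Set.mem_empty_iff_false, iff_false]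
  rintro ⟨hT, _⟩; rw [h] at hT; exact Bool.noConfusion hT

lemma not_rel_of_const {f : (Fin n → Bool) → Bool} {c : Bool} (h : ∀ x, f x = c)
    (j : Fin n) : ¬ Relevant f j := by
  rintro ⟨x, hx⟩; exact hx ((h _).trans (h _).symm)

/-- decomposition `f = xᵢ ∨ g`: extremal count and relevant set -/
lemma dec_or {f : (Fin n → Bool) → Bool} (hpos : Positive f) (i : Fin n)
    (h1 : ∀ x, res f i true x = true)
    (h0 : res f i false (fun _ => false) = false) :
    ({a : Fin n → Bool | MaxZero f a ∨ MinOne f a}.ncard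
      = {a : Fin n → Bool | MaxZero (res f i false) a ∨ MinOne (res f i false) a}.ncard + 1) ∧
    {j : Fin n | Relevant f j} = insert i {j : Fin n | Relevant (res f i false) j} := by
  constructor
  · rw [ext_ncard_eq f, ext_ncard_eq (res f i false),
      mt_ncard_split hpos i, mf_ncard_split hpos i]
    have e1 : {a : Fin n → Bool | MinOne (res f i true) a ∧ res f i false a = false}
        = {fun _ => false} := by
      ext a
      simp only [Set.mem_setOf_eq, Set.mem_singleton_iff]
      constructor
      · rintro ⟨hm, _⟩
        have := minone_const_true h1
        rw [Set.ext_iff] at this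
        exact (this a).mp hm
      · rintro rfl
        refine ⟨?_, h0⟩
        have := minone_const_true h1
        rw [Set.ext_iff] at this
        exact (this _).mpr rfl
    have e2 : {b : Fin n → Bool | MaxZero (res f i true) b} = ∅ := maxzero_const_true h1
    have e3 : {b : Fin n → Bool | MaxZero (res f i false) b ∧ res f i true b = true}
        = {b : Fin n → Bool | MaxZero (res f i false) b} := by
      ext b; simp only [Set.mem_setOf_eq, and_iff_left_iff_imp]; intro _; exact h1 b
    rw [e1, e2, e3, Set.ncard_singleton, Set.ncard_empty]
    omega
  · ext j
    simp only [Set.mem_setOf_eq, Set.mem_insert_iff]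
    constructor
    · intro hj
      by_cases hji : j = i
      · exact Or.inl hji
      · rcases rel_of_rel_ne hj hji with h | h
        · exact Or.inr h
        · exact absurd h (not_rel_of_const h1 j)
    · rintro (rfl | hj)
      · refine ⟨fun _ => false, ?_⟩
        show res f _ false _ ≠ res f _ true _
        rw [h0, h1]
        simp
      · exact rel_res_rel hj

/-- decomposition `f = xᵢ ∧ g`: extremal count and relevant set -/
lemma dec_and {f : (Fin n → Bool) → Bool} (hpos : Positive f) (i : Fin n)
    (h0 : ∀ x, res f i false x = false)
    (h1 : res f i true (fun _ => true) = true) :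
    ({a : Fin n → Bool | MaxZero f a ∨ MinOne f a}.ncard
      = {a : Fin n → Bool | MaxZero (res f i true) a ∨ MinOne (res f i true) a}.ncard + 1) ∧
    {j : Fin n | Relevant f j} = insert i {j : Fin n | Relevant (res f i true) j} := by
  constructor
  · rw [ext_ncard_eq f, ext_ncard_eq (res f i true),
      mt_ncard_split hpos i, mf_ncard_split hpos i]
    have e1 : {b : Fin n → Bool | MaxZero (res f i false) b ∧ res f i true b = true}
        = {fun _ => true} := by
      ext b
      simp only [Set.mem_setOf_eq, Set.mem_singleton_iff]
      constructor
      · rintro ⟨hm, _⟩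
        have := maxzero_const_false h0
        rw [Set.ext_iff] at this
        exact (this b).mp hm
      · rintro rfl
        refine ⟨?_, h1⟩
        have := maxzero_const_false h0
        rw [Set.ext_iff] at this
        exact (this _).mpr rfl
    have e2 : {a : Fin n → Bool | MinOne (res f i false) a} = ∅ := minone_const_false h0
    have e3 : {a : Fin n → Bool | MinOne (res f i true) a ∧ res f i false a = false}
        = {a : Fin n → Bool | MinOne (res f i true) a} := by
      ext a; simp only [Set.mem_setOf_eq, and_iff_left_iff_imp]; intro _; exact h0 a
    rw [e1, e2, e3, Set.ncard_singleton, Set.ncard_empty]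
    omega
  · ext j
    simp only [Set.mem_setOf_eq, Set.mem_insert_iff]
    constructor
    · intro hj
      by_cases hji : j = i
      · exact Or.inl hji
      · rcases rel_of_rel_ne hj hji with h | h
        · exact absurd h (not_rel_of_const h0 j)
        · exact Or.inr h
    · rintro (rfl | hj)
      · refine ⟨fun _ => true, ?_⟩
        show res f _ false _ ≠ res f _ true _
        rw [h0, h1]
        simp
      · exact rel_res_rel hj

end LROAux

namespace LROAux

variable {n : ℕ}

lemma sum_upd (w : Fin n → ℝ) (x : Fin n → Bool) (j : Fin n) (c : Bool) :
    ∑ l, w l * toR (Function.update x j c) l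
      = (if c then w j else 0) + (∑ l, w l * toR x l - w j * toR x j) := by
  have e : (fun l => w l * toR (Function.update x j c) l)
      = Function.update (fun l => w l * toR x l) j (if c then w j else 0) := by
    funext l
    by_cases hl : l = j
    · subst hl
      simp only [Function.update_self, toR, upd_apply, if_pos rfl]
      cases c <;> simp
    · rw [Function.update_of_ne hl]
      simp only [toR, upd_apply, if_neg hl]
  rw [e, Finset.sum_update_of_mem (Finset.mem_univ j), ← Finset.erase_eq,
    Finset.sum_erase_eq_sub (Finset.mem_univ j)]

lemma sum_mask (w : Fin n → ℝ) (x : Fin n → Bool) (i : Fin n) :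
    ∑ l, (if l = i then 0 else w l) * toR x l
      = ∑ l, w l * toR x l - w i * toR x i := by
  have e : (fun l => (if l = i then 0 else w l) * toR x l)
      = Function.update (fun l => w l * toR x l) i 0 := by
    funext l
    by_cases hl : l = i
    · subst hl; simp
    · rw [Function.update_of_ne hl, if_neg hl]
  rw [e, Finset.sum_update_of_mem (Finset.mem_univ i), ← Finset.erase_eq,
    Finset.sum_erase_eq_sub (Finset.mem_univ i)]
  ring

lemma norm_weights {f : (Fin n → Bool) → Bool} (hpos : Positive f) (hth : IsThreshold f) :
    ∃ (w : Fin n → ℝ) (t : ℝ), (∀ x, f x = false ↔ ∑ l, w l * toR x l ≤ t) ∧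
      (∀ j, Relevant f j → 0 < w j) := by
  classical
  obtain ⟨w, t, hw⟩ := hth
  refine ⟨fun j => if Relevant f j then w j else 0, t, ?_, ?_⟩
  · intro x
    set xt : Fin n → Bool := fun j => if Relevant f j then x j else false with hxt
    have hfx : f x = f xt := by
      apply eq_on_rel
      intro j hj; simp [hxt, hj]
    have hsum : ∑ l, (if Relevant f l then w l else 0) * toR x l
        = ∑ l, w l * toR xt l := by
      apply Finset.sum_congr rfl
      intro l _
      by_cases hl : Relevant f l <;> simp [hxt, hl, toR]
    rw [hfx, hsum]
    exact hw xt
  · intro j hj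
    simp only [if_pos hj]
    obtain ⟨x, hx0, hx1⟩ := pos_rel_witness hpos hj
    have h0 : ∑ l, w l * toR (Function.update x j false) l ≤ t := (hw _).mp hx0
    have h1 : ¬ (∑ l, w l * toR (Function.update x j true) l ≤ t) := by
      intro hle
      rw [(hw _).mpr hle] at hx1
      exact Bool.noConfusion hx1
    rw [sum_upd] at h0 h1
    simp only [if_pos, if_neg] at h0 h1
    push_neg at h1
    have : (0:ℝ) + (∑ l, w l * toR x l - w j * toR x j) ≤ t := by simpa using h0
    nlinarith [h1, this]

lemma res_false_iff {f : (Fin n → Bool) → Bool} {w : Fin n → ℝ} {t : ℝ}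
    (hw : ∀ x, f x = false ↔ ∑ l, w l * toR x l ≤ t) (i : Fin n) (x : Fin n → Bool) :
    res f i false x = false ↔ ∑ l, w l * toR x l - w i * toR x i ≤ t := by
  have := hw (Function.update x i false)
  rw [sum_upd] at this
  simpa [res] using this

lemma res_true_iff {f : (Fin n → Bool) → Bool} {w : Fin n → ℝ} {t : ℝ}
    (hw : ∀ x, f x = false ↔ ∑ l, w l * toR x l ≤ t) (i : Fin n) (x : Fin n → Bool) :
    res f i true x = false ↔ w i + (∑ l, w l * toR x l - w i * toR x i) ≤ t := by
  have := hw (Function.update x i true)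
  rw [sum_upd] at this
  simpa [res] using this

lemma res_threshold {f : (Fin n → Bool) → Bool} (hth : IsThreshold f) (i : Fin n)
    (c : Bool) : IsThreshold (res f i c) := by
  obtain ⟨w, t, hw⟩ := hth
  cases c
  · refine ⟨fun l => if l = i then 0 else w l, t, fun x => ?_⟩
    rw [sum_mask, res_false_iff hw]
  · refine ⟨fun l => if l = i then 0 else w l, t - w i, fun x => ?_⟩
    rw [sum_mask, res_true_iff hw]
    constructor <;> intro h <;> linarith

lemma exists_true_coord {a : Fin n → Bool} (h : a ≠ (fun _ => false)) :
    ∃ j, a j = true := by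
  by_contra hc
  push_neg at hc
  exact h (funext fun j => by simpa using hc j)

lemma exists_false_coord {a : Fin n → Bool} (h : a ≠ (fun _ => true)) :
    ∃ j, a j = false := by
  by_contra hc
  push_neg at hc
  refine h (funext fun j => ?_)
  have := hc j
  revert this; cases a j <;> simp

/-- P2 : with `i` of maximal weight, every minimal true point of the upper
restriction is false in the lower restriction. -/
lemma p_two {f : (Fin n → Bool) → Bool} {w : Fin n → ℝ} {t : ℝ} {i : Fin n}
    (hpos : Positive f)
    (hw : ∀ x, f x = false ↔ ∑ l, w l * toR x l ≤ t)
    (hmax : ∀ j, Relevant f j → w j ≤ w i)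
    (hC1 : ¬ ∀ x, res f i true x = true) :
    ∀ a, MinOne (res f i true) a → res f i false a = false := by
  intro a ha
  have hai : a i = false := mt_res_coord ha
  have hbot : a ≠ (fun _ => false) := by
    rintro rfl
    apply hC1
    intro x
    exact res_pos hpos i true _ x (fun j => Bool.false_le _) ha.1
  obtain ⟨j, hj⟩ := exists_true_coord hbot
  have hji : j ≠ i := by rintro rfl; rw [hai] at hj; exact Bool.noConfusion hj
  have hne : Function.update a j false ≠ a := by
    intro e; have := congrFun e j; rw [upd_apply, if_pos rfl, hj] at this
    exact Bool.noConfusion this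
  have hminb := ha.2 (Function.update a j false) (upd_false_le a j) hne
  have hrelj : Relevant f j := by
    apply rel_res_rel (i := i) (c := true)
    refine ⟨a, ?_⟩
    rw [hminb, upd_self a j hj, ha.1]
    simp
  have hwj : w j ≤ w i := hmax j hrelj
  rw [res_true_iff hw] at hminb
  rw [sum_upd] at hminb
  have e1 : toR (Function.update a j false) i = 0 := by
    simp [toR, upd_apply, Ne.symm hji, hai]
  have e2 : toR a j = 1 := by simp [toR, hj]
  have e3 : toR a i = 0 := by simp [toR, hai]
  rw [e1, e2] at hminb
  simp only [Bool.false_eq_true, if_false] at hminb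
  rw [res_false_iff hw, e3]
  linarith

/-- P1 : with `i` of maximal weight, every maximal false point of the lower
restriction is true in the upper restriction. -/
lemma p_one {f : (Fin n → Bool) → Bool} {w : Fin n → ℝ} {t : ℝ} {i : Fin n}
    (hpos : Positive f)
    (hw : ∀ x, f x = false ↔ ∑ l, w l * toR x l ≤ t)
    (hmax : ∀ j, Relevant f j → w j ≤ w i)
    (hC0 : ¬ ∀ x, res f i false x = false) :
    ∀ b, MaxZero (res f i false) b → res f i true b = true := by
  intro b hb
  have hbi : b i = true := mz_res_coord hb
  have htop : b ≠ (fun _ => true) := by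
    rintro rfl
    apply hC0
    intro x
    exact pos_false (res_pos hpos i false) (fun j => Bool.le_true _) hb.1
  obtain ⟨j, hj⟩ := exists_false_coord htop
  have hji : j ≠ i := by rintro rfl; rw [hbi] at hj; exact Bool.noConfusion hj
  have hne : Function.update b j true ≠ b := by
    intro e; have := congrFun e j; rw [upd_apply, if_pos rfl, hj] at this
    exact Bool.noConfusion this
  have hmaxc := hb.2 (Function.update b j true) (le_upd_true b j) hne
  have hrelj : Relevant f j := by
    apply rel_res_rel (i := i) (c := false)
    refine ⟨b, ?_⟩
    rw [upd_self b j hj, hb.1, hmaxc]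
    simp
  have hwj : w j ≤ w i := hmax j hrelj
  have hmaxc' : ¬ (res f i false (Function.update b j true) = false) := by
    rw [hmaxc]; simp
  rw [res_false_iff hw] at hmaxc'
  rw [sum_upd] at hmaxc'
  have e1 : toR (Function.update b j true) i = 1 := by
    simp [toR, upd_apply, Ne.symm hji, hbi]
  have e2 : toR b j = 0 := by simp [toR, hj]
  have e3 : toR b i = 1 := by simp [toR, hbi]
  rw [e1, e2] at hmaxc'
  simp only [if_pos] at hmaxc'
  push_neg at hmaxc'
  cases hres : res f i true b
  · rw [res_true_iff hw, e3] at hres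
    linarith
  · rfl

end LROAux

namespace LROAux

variable {n : ℕ}

/-- linear read-once with all formula variables relevant -/
def LROrel (f : (Fin n → Bool) → Bool) : Prop :=
  (∃ c, ∀ x, f x = c) ∨
    ∃ φ : NF n, φ.WF ∧ (∀ j, NF.Mem j φ → Relevant f j) ∧ ∀ x, f x = φ.eval x

lemma res_eq_self_false {f : (Fin n → Bool) → Bool} {x : Fin n → Bool} {i : Fin n}
    (hx : x i = false) : res f i false x = f x := by
  show f (Function.update x i false) = f x
  rw [upd_self x i hx]

lemma res_eq_self_true {f : (Fin n → Bool) → Bool} {x : Fin n → Bool} {i : Fin n}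
    (hx : x i = true) : res f i true x = f x := by
  show f (Function.update x i true) = f x
  rw [upd_self x i hx]

lemma main_lemma : ∀ m : ℕ, ∀ f : (Fin n → Bool) → Bool, Positive f → IsThreshold f →
    {j : Fin n | Relevant f j}.ncard = m →
    (m + 1 ≤ {a : Fin n → Bool | MaxZero f a ∨ MinOne f a}.ncard ∧
      ({a : Fin n → Bool | MaxZero f a ∨ MinOne f a}.ncard = m + 1 → LROrel f)) := by
  intro m
  induction m using Nat.strong_induction_on with
  | _ m ih =>
    intro f hpos hth hm
    rcases Nat.eq_zero_or_pos m with rfl | hm0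
    · -- no relevant variables : f is constant
      have hrel : {j : Fin n | Relevant f j} = ∅ := (Set.ncard_eq_zero (Set.toFinite _)).mp hm
      have hconst : ∀ x, f x = f (fun _ => false) := by
        apply const_of_no_rel
        intro j hj
        rw [Set.ext_iff] at hrel
        exact (hrel j).mp hj
      constructor
      · rw [ext_const_ncard hconst]
      · intro _
        exact Or.inl ⟨f (fun _ => false), hconst⟩
    · -- at least one relevant variable
      obtain ⟨w, t, hw, hwpos⟩ := norm_weights hpos hth
      have hsne : ((Set.toFinite {j : Fin n | Relevant f j}).toFinset).Nonempty := by
        rw [Set.Finite.toFinset_nonempty]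
        exact Set.nonempty_of_ncard_ne_zero (by omega)
      obtain ⟨i, hi_mem, hi_max⟩ := Finset.exists_max_image _ w hsne
      have hi_rel : Relevant f i := by
        rwa [Set.Finite.mem_toFinset] at hi_mem
      have hmax : ∀ j, Relevant f j → w j ≤ w i := fun j hj =>
        hi_max j ((Set.Finite.mem_toFinset _).mpr hj)
      have hg0pos := res_pos hpos i false
      have hg1pos := res_pos hpos i true
      have hg0th := res_threshold hth i false
      have hg1th := res_threshold hth i true
      have hdiff : ({j : Fin n | Relevant f j} \ {i}).ncard + 1 = m := by
        rw [← hm]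
        exact Set.ncard_diff_singleton_add_one hi_rel (Set.toFinite _)
      have hsub0 : {j : Fin n | Relevant (res f i false) j} ⊆ {j : Fin n | Relevant f j} \ {i} := by
        intro j hj
        refine ⟨rel_res_rel hj, ?_⟩
        intro hji
        rw [Set.mem_singleton_iff] at hji
        subst hji
        exact res_not_rel f j false hj
      have hsub1 : {j : Fin n | Relevant (res f i true) j} ⊆ {j : Fin n | Relevant f j} \ {i} := by
        intro j hj
        refine ⟨rel_res_rel hj, ?_⟩
        intro hji
        rw [Set.mem_singleton_iff] at hji
        subst hji
        exact res_not_rel f j true hj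
      have hk0le : {j : Fin n | Relevant (res f i false) j}.ncard ≤ m - 1 := by
        have := Set.ncard_le_ncard hsub0 (Set.toFinite _); omega
      have hk1le : {j : Fin n | Relevant (res f i true) j}.ncard ≤ m - 1 := by
        have := Set.ncard_le_ncard hsub1 (Set.toFinite _); omega
      by_cases hC1 : ∀ x, res f i true x = true
      · -- f = xᵢ ∨ g₀
        cases hb : res f i false (fun _ => false)
        · obtain ⟨hcard, hrel⟩ := dec_or hpos i hC1 hb
          have hnotmem : i ∉ {j : Fin n | Relevant (res f i false) j} :=
            res_not_rel f i false
          have hk0 : {j : Fin n | Relevant (res f i false) j}.ncard = m - 1 := by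
            rw [hrel, Set.ncard_insert_of_notMem hnotmem (Set.toFinite _)] at hm
            omega
          obtain ⟨hlow, hlro⟩ := ih (m - 1) (by omega) _ hg0pos hg0th hk0
          constructor
          · omega
          · intro hcnt
            have hcnt0 : {a : Fin n → Bool | MaxZero (res f i false) a ∨
                MinOne (res f i false) a}.ncard = (m - 1) + 1 := by omega
            rcases hlro hcnt0 with ⟨c, hc⟩ | ⟨φ0, hwf0, hmem0, he0⟩
            · -- g₀ constant, necessarily false, so f = xᵢ
              have hcf : c = false := by rw [← hc (fun _ => false), hb]
              subst hcf
              refine Or.inr ⟨NF.lit true i, trivial, ?_, ?_⟩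
              · intro j hj
                have : j = i := hj
                subst this; exact hi_rel
              · intro x
                simp only [NF.eval, if_pos rfl]
                cases hx : x i
                · rw [← res_eq_self_false (f := f) hx, hc x]; simp
                · rw [← res_eq_self_true (f := f) hx, hC1 x]; simp
            · refine Or.inr ⟨NF.orF true i φ0, ⟨?_, hwf0⟩, ?_, ?_⟩
              · intro hmem
                exact res_not_rel f i false (hmem0 i hmem)
              · rintro j (rfl | hj)
                · exact hi_rel
                · exact rel_res_rel (hmem0 j hj)
              · intro x
                simp only [NF.eval, if_pos rfl]
                cases hx : x i
                · rw [← res_eq_self_false (f := f) hx, he0 x]; simp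
                · rw [← res_eq_self_true (f := f) hx, hC1 x]; simp
        · -- res f i false ⊥ = true would make f constant true
          exfalso
          have hftrue : ∀ x, f x = true := by
            intro x
            refine hpos _ x (fun j => ?_) hb
            rw [upd_apply]
            by_cases hj : j = i <;> simp [hj]
          have := rel_const_empty hftrue
          rw [this, Set.ncard_empty] at hm
          omega
      · by_cases hC0 : ∀ x, res f i false x = false
        · -- f = xᵢ ∧ g₁
          cases hbt : res f i true (fun _ => true)
          · -- res f i true ⊤ = false would make f constant false
            exfalso
            have hffalse : ∀ x, f x = false := by
              intro x
              refine pos_false hpos (fun j => ?_) hbt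
              rw [upd_apply]
              by_cases hj : j = i <;> simp [hj]
            have := rel_const_empty hffalse
            rw [this, Set.ncard_empty] at hm
            omega
          · obtain ⟨hcard, hrel⟩ := dec_and hpos i hC0 hbt
            have hnotmem : i ∉ {j : Fin n | Relevant (res f i true) j} :=
              res_not_rel f i true
            have hk1 : {j : Fin n | Relevant (res f i true) j}.ncard = m - 1 := by
              rw [hrel, Set.ncard_insert_of_notMem hnotmem (Set.toFinite _)] at hm
              omega
            obtain ⟨hlow, hlro⟩ := ih (m - 1) (by omega) _ hg1pos hg1th hk1
            constructor
            · omega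
            · intro hcnt
              have hcnt1 : {a : Fin n → Bool | MaxZero (res f i true) a ∨
                  MinOne (res f i true) a}.ncard = (m - 1) + 1 := by omega
              rcases hlro hcnt1 with ⟨c, hc⟩ | ⟨φ1, hwf1, hmem1, he1⟩
              · -- g₁ constant : contradiction with case hypotheses
                exfalso
                have hct : c = true := by rw [← hc (fun _ => true), hbt]
                subst hct
                exact hC1 hc
              · refine Or.inr ⟨NF.andF true i φ1, ⟨?_, hwf1⟩, ?_, ?_⟩
                · intro hmem
                  exact res_not_rel f i true (hmem1 i hmem)
                · rintro j (rfl | hj)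
                  · exact hi_rel
                  · exact rel_res_rel (hmem1 j hj)
                · intro x
                  simp only [NF.eval, if_pos rfl]
                  cases hx : x i
                  · rw [← res_eq_self_false (f := f) hx, hC0 x]; simp
                  · rw [← res_eq_self_true (f := f) hx, he1 x]; simp
        · -- main case : both restrictions nonconstant in the relevant direction
          have hP2 := p_two hpos hw hmax hC1
          have hP1 := p_one hpos hw hmax hC0
          have e1 : {a : Fin n → Bool | MinOne (res f i true) a ∧ res f i false a = false}
              = {a : Fin n → Bool | MinOne (res f i true) a} := by
            ext a; simp only [Set.mem_setOf_eq, and_iff_left_iff_imp]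
            intro ha; exact hP2 a ha
          have e2 : {b : Fin n → Bool | MaxZero (res f i false) b ∧ res f i true b = true}
              = {b : Fin n → Bool | MaxZero (res f i false) b} := by
            ext b; simp only [Set.mem_setOf_eq, and_iff_left_iff_imp]
            intro hb; exact hP1 b hb
          have hsplit : {a : Fin n → Bool | MaxZero f a ∨ MinOne f a}.ncard =
              {a : Fin n → Bool | MaxZero (res f i false) a ∨ MinOne (res f i false) a}.ncard +
              {a : Fin n → Bool | MaxZero (res f i true) a ∨ MinOne (res f i true) a}.ncard := by
            rw [ext_ncard_eq f, ext_ncard_eq (res f i false), ext_ncard_eq (res f i true),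
              mt_ncard_split hpos i, mf_ncard_split hpos i, e1, e2]
            omega
          obtain ⟨hlow0, _⟩ := ih _ (by omega : {j : Fin n | Relevant (res f i false) j}.ncard < m)
            _ hg0pos hg0th rfl
          obtain ⟨hlow1, _⟩ := ih _ (by omega : {j : Fin n | Relevant (res f i true) j}.ncard < m)
            _ hg1pos hg1th rfl
          have hcover : {j : Fin n | Relevant f j} \ {i} ⊆
              {j : Fin n | Relevant (res f i false) j} ∪ {j : Fin n | Relevant (res f i true) j} := by
            rintro j ⟨hj, hji⟩
            rw [Set.mem_singleton_iff] at hji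
            exact rel_of_rel_ne hj hji
          have hcover_card : m - 1 ≤ {j : Fin n | Relevant (res f i false) j}.ncard +
              {j : Fin n | Relevant (res f i true) j}.ncard := by
            have h1 := Set.ncard_le_ncard hcover (Set.toFinite _)
            have h2 := Set.ncard_union_le {j : Fin n | Relevant (res f i false) j}
              {j : Fin n | Relevant (res f i true) j}
            omega
          constructor
          · omega
          · intro hcnt
            exfalso
            -- equality forces the relevant sets of the two restrictions to be disjoint
            have hsum : {j : Fin n | Relevant (res f i false) j}.ncard +
                {j : Fin n | Relevant (res f i true) j}.ncard = m - 1 := by omega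
            have hinter : {j : Fin n | Relevant (res f i false) j} ∩
                {j : Fin n | Relevant (res f i true) j} = ∅ := by
              have hun := Set.ncard_inter_add_ncard_union
                {j : Fin n | Relevant (res f i false) j}
                {j : Fin n | Relevant (res f i true) j} (Set.toFinite _) (Set.toFinite _)
              have hge := Set.ncard_le_ncard hcover (Set.toFinite _)
              have hle := Set.ncard_union_le {j : Fin n | Relevant (res f i false) j}
                {j : Fin n | Relevant (res f i true) j}
              rw [← Set.ncard_eq_zero (Set.toFinite _)]
              omega
            -- but then `g₀ ≤ g₁` forces g₁ ≡ true, contradiction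
            push_neg at hC0
            obtain ⟨x1, hx1⟩ := hC0
            have hx1t : res f i false x1 = true := by
              revert hx1; cases res f i false x1 <;> simp
            apply hC1
            intro y
            classical
            set u : Fin n → Bool := fun j => if Relevant (res f i false) j then x1 j else y j
              with hu
            have hg0u : res f i false u = res f i false x1 := by
              apply eq_on_rel
              intro j hj; simp [hu, hj]
            have hg1u : res f i true u = res f i true y := by
              apply eq_on_rel
              intro j hj
              have hnj : ¬ Relevant (res f i false) j := by
                intro hj0
                have : j ∈ ({j : Fin n | Relevant (res f i false) j} ∩
                    {j : Fin n | Relevant (res f i true) j}) := ⟨hj0, hj⟩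
                rw [hinter] at this
                exact this
              simp [hu, hnj]
            have hle2 : ∀ j, Function.update u i false j ≤ Function.update u i true j := by
              intro j; rw [upd_apply, upd_apply]
              by_cases hj : j = i <;> simp [hj]
            have hg1ut : res f i true u = true := by
              apply hpos _ _ hle2
              show res f i false u = true
              rw [hg0u]; exact hx1t
            rw [← hg1u]
            exact hg1ut

end LROAux

namespace LROAux

variable {n : ℕ}

lemma bot_le_all (i : Fin n) (c : Bool) (x : Fin n → Bool) :
    ∀ j, Function.update (fun _ => false) i false j ≤ x j := by
  intro j; rw [upd_apply]; by_cases hj : j = i <;> simp [hj]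

lemma all_le_top (i : Fin n) (x : Fin n → Bool) :
    ∀ j, x j ≤ Function.update (fun _ => true) i true j := by
  intro j; rw [upd_apply]; by_cases hj : j = i <;> simp [hj]

lemma upd_mono_i (x : Fin n → Bool) (i : Fin n) :
    ∀ j, Function.update x i false j ≤ Function.update x i true j := by
  intro j; rw [upd_apply, upd_apply]; by_cases hj : j = i <;> simp [hj]

lemma formula_count : ∀ φ : NF n, φ.WF → ∀ f : (Fin n → Bool) → Bool, Positive f →
    (∀ x, f x = φ.eval x) →
    ({j : Fin n | Relevant f j} = {j : Fin n | NF.Mem j φ} ∧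
      {a : Fin n → Bool | MaxZero f a ∨ MinOne f a}.ncard
        = {j : Fin n | NF.Mem j φ}.ncard + 1) := by
  intro φ
  induction φ with
  | lit b i =>
    intro hwf f hpos he
    cases b
    · exfalso
      have h1 : f (Function.update (fun _ => false) i false) = true := by
        rw [he]; simp [NF.eval, upd_apply]
      have h2 := hpos _ (Function.update (fun _ => false) i true) (upd_mono_i _ i) h1
      rw [he] at h2; simp [NF.eval, upd_apply] at h2
    · have h1 : ∀ x, res f i true x = true := by
        intro x; show f _ = true; rw [he]; simp [NF.eval, upd_apply]
      have h0 : res f i false (fun _ => false) = false := by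
        show f _ = false; rw [he]; simp [NF.eval, upd_apply]
      obtain ⟨hcard, hrel⟩ := dec_or hpos i h1 h0
      have hg0const : ∀ x, res f i false x = false := by
        intro x; show f _ = false; rw [he]; simp [NF.eval, upd_apply]
      have hrelg0 : {j : Fin n | Relevant (res f i false) j} = ∅ :=
        rel_const_empty hg0const
      have hmemset : {j : Fin n | NF.Mem j (NF.lit true i)} = {i} := by
        ext j
        simp only [Set.mem_setOf_eq, Set.mem_singleton_iff]
        exact Iff.rfl
      constructor
      · rw [hrel, hrelg0, hmemset]; simp
      · rw [hcard, ext_const_ncard hg0const, hmemset, Set.ncard_singleton]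
  | orF b i t iht =>
    intro hwf f hpos he
    obtain ⟨hmem, hwt⟩ := hwf
    obtain ⟨⟨x0, hx0⟩, _⟩ := wf_nonconst t hwt
    cases b
    · exfalso
      have h1 : f (Function.update x0 i false) = true := by
        rw [he]; simp [NF.eval, upd_apply]
      have h2 : f (Function.update x0 i true) = false := by
        rw [he]; simp [NF.eval, upd_apply, eval_update_of_not_mem t hmem, hx0]
      have := hpos _ _ (upd_mono_i x0 i) h1
      rw [h2] at this; exact Bool.noConfusion this
    · have h1 : ∀ x, res f i true x = true := by
        intro x; show f _ = true; rw [he]; simp [NF.eval, upd_apply]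
      have h0 : res f i false (fun _ => false) = false := by
        cases hcb : res f i false (fun _ => false)
        · rfl
        · exfalso
          have hf0 : f (Function.update x0 i false) = false := by
            rw [he]; simp [NF.eval, upd_apply, eval_update_of_not_mem t hmem, hx0]
          have : f (Function.update x0 i false) = true :=
            hpos _ _ (bot_le_all i false _) hcb
          rw [hf0] at this; exact Bool.noConfusion this
      obtain ⟨hcard, hrel⟩ := dec_or hpos i h1 h0
      have hg0eval : ∀ x, res f i false x = t.eval x := by
        intro x; show f (Function.update x i false) = t.eval x
        rw [he]; simp [NF.eval, upd_apply, eval_update_of_not_mem t hmem]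
      obtain ⟨hrelt, hcardt⟩ := iht hwt (res f i false) (res_pos hpos i false) hg0eval
      have hmemset : {j : Fin n | NF.Mem j (NF.orF true i t)}
          = insert i {j : Fin n | NF.Mem j t} := by
        ext j
        simp only [Set.mem_setOf_eq, Set.mem_insert_iff]
        exact Iff.rfl
      have hinotmem : i ∉ {j : Fin n | NF.Mem j t} := hmem
      constructor
      · rw [hrel, hrelt, hmemset]
      · rw [hcard, hcardt, hmemset, Set.ncard_insert_of_notMem hinotmem (Set.toFinite _)]
  | andF b i t iht =>
    intro hwf f hpos he
    obtain ⟨hmem, hwt⟩ := hwf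
    obtain ⟨_, ⟨x1, hx1⟩⟩ := wf_nonconst t hwt
    cases b
    · exfalso
      have h1 : f (Function.update x1 i false) = true := by
        rw [he]; simp [NF.eval, upd_apply, eval_update_of_not_mem t hmem, hx1]
      have h2 : f (Function.update x1 i true) = false := by
        rw [he]; simp [NF.eval, upd_apply]
      have := hpos _ _ (upd_mono_i x1 i) h1
      rw [h2] at this; exact Bool.noConfusion this
    · have h0 : ∀ x, res f i false x = false := by
        intro x; show f _ = false; rw [he]; simp [NF.eval, upd_apply]
      have h1 : res f i true (fun _ => true) = true := by
        cases hcb : res f i true (fun _ => true)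
        · exfalso
          have hf1 : f (Function.update x1 i true) = true := by
            rw [he]; simp [NF.eval, upd_apply, eval_update_of_not_mem t hmem, hx1]
          have : f (Function.update x1 i true) = false :=
            pos_false hpos (all_le_top i _) hcb
          rw [hf1] at this; exact Bool.noConfusion this
        · rfl
      obtain ⟨hcard, hrel⟩ := dec_and hpos i h0 h1
      have hg1eval : ∀ x, res f i true x = t.eval x := by
        intro x; show f (Function.update x i true) = t.eval x
        rw [he]; simp [NF.eval, upd_apply, eval_update_of_not_mem t hmem]
      obtain ⟨hrelt, hcardt⟩ := iht hwt (res f i true) (res_pos hpos i true) hg1eval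
      have hmemset : {j : Fin n | NF.Mem j (NF.andF true i t)}
          = insert i {j : Fin n | NF.Mem j t} := by
        ext j
        simp only [Set.mem_setOf_eq, Set.mem_insert_iff]
        exact Iff.rfl
      have hinotmem : i ∉ {j : Fin n | NF.Mem j t} := hmem
      constructor
      · rw [hrel, hrelt, hmemset]
      · rw [hcard, hcardt, hmemset, Set.ncard_insert_of_notMem hinotmem (Set.toFinite _)]

end LROAux

/-- A positive threshold function with `k` relevant variables has exactly `k+1`
extremal points iff it is linear read-once. -/
theorem extremal_count_eq_iff_lro (n : ℕ) (f : (Fin n → Bool) → Bool)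
    (hpos : Positive f) (hth : IsThreshold f) :
    {a : Fin n → Bool | MaxZero f a ∨ MinOne f a}.ncard =
      {j : Fin n | Relevant f j}.ncard + 1 ↔ LinearReadOnce f := by
  constructor
  · intro hcount
    obtain ⟨_, h2⟩ := LROAux.main_lemma ({j : Fin n | Relevant f j}.ncard) f hpos hth rfl
    rcases h2 hcount with ⟨c, hc⟩ | ⟨φ, hwf, _, heval⟩
    · exact Or.inl ⟨c, hc⟩
    · exact Or.inr ⟨φ, hwf, heval⟩
  · intro hlro
    rcases hlro with ⟨c, hc⟩ | ⟨φ, hwf, heval⟩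
    · rw [LROAux.ext_const_ncard hc, LROAux.rel_const_empty hc, Set.ncard_empty]
    · obtain ⟨hrel, hcount⟩ := LROAux.formula_count φ hwf f hpos heval
      rw [hcount, hrel]
end

section
/- Let f be a positive nested Boolean function of n variables (a linear read-once function depending on all n variables). Then f has exactly n+1 extremal points, i.e., |Z^f| + |U^f| = n+1 where Z^f is the set of maximal zeros and U^f the set of minimal ones. -/
namespace NestedAux

variable {n : ℕ}

lemma bool_le_iff {x y : Bool} : x ≤ y ↔ (x = true → y = true) := Bool.le_iff_imp

lemma eval_update {t : NF n} {j : Fin n} (h : ¬ NF.Mem j t) (x : Fin n → Bool) (c : Bool) :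
    t.eval (Function.update x j c) = t.eval x := by
  induction t with
  | lit b i =>
      simp only [NF.Mem] at h
      simp [NF.eval, Function.update_of_ne (Ne.symm h)]
  | orF b i t ih =>
      simp only [NF.Mem, not_or] at h
      simp [NF.eval, Function.update_of_ne (Ne.symm h.1), ih h.2]
  | andF b i t ih =>
      simp only [NF.Mem, not_or] at h
      simp [NF.eval, Function.update_of_ne (Ne.symm h.1), ih h.2]

lemma update_le {x y : Fin n → Bool} (i : Fin n) (c : Bool) (h : ∀ k, x k ≤ y k) :
    ∀ k, Function.update x i c k ≤ Function.update y i c k := by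
  intro k
  rcases eq_or_ne k i with rfl | hk
  · simp
  · simpa [Function.update_of_ne hk] using h k

lemma le_update_true (a : Fin n → Bool) (j : Fin n) :
    ∀ k, a k ≤ Function.update a j true k := by
  intro k
  rcases eq_or_ne k j with rfl | hk
  · simp
  · simp [Function.update_of_ne hk]

lemma update_false_le (a : Fin n → Bool) (j : Fin n) :
    ∀ k, Function.update a j false k ≤ a k := by
  intro k
  rcases eq_or_ne k j with rfl | hk
  · simp
  · simp [Function.update_of_ne hk]

lemma update_true_ne {a : Fin n → Bool} {j : Fin n} (h : a j = false) :
    Function.update a j true ≠ a := by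
  intro he
  have := congrFun he j
  rw [Function.update_self] at this
  rw [h] at this
  exact Bool.true_eq_false.mp this

lemma update_false_ne {a : Fin n → Bool} {j : Fin n} (h : a j = true) :
    Function.update a j false ≠ a := by
  intro he
  have := congrFun he j
  rw [Function.update_self] at this
  rw [h] at this
  exact Bool.false_eq_true.mp this

/-! ### Constant functions -/

lemma maxZero_const_false {f : (Fin n → Bool) → Bool} (h : ∀ x, f x = false) :
    {a : Fin n → Bool | MaxZero f a} = {fun _ => true} := by
  ext a
  simp only [Set.mem_setOf_eq, Set.mem_singleton_iff, MaxZero, h]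
  constructor
  · rintro ⟨-, hmax⟩
    funext j
    by_contra hj
    have haj : a j = false := by
      cases hval : a j
      · rfl
      · exact absurd hval hj
    have := hmax (Function.update a j true) (le_update_true a j) (update_true_ne haj)
    simp [h] at this
  · rintro rfl
    refine ⟨trivial, fun b hb hne => absurd ?_ hne⟩
    funext k
    exact le_antisymm (Bool.le_true _) (hb k)

lemma minOne_const_false {f : (Fin n → Bool) → Bool} (h : ∀ x, f x = false) :
    {a : Fin n → Bool | MinOne f a} = ∅ := by
  ext a
  simp [MinOne, h]

lemma minOne_const_true {f : (Fin n → Bool) → Bool} (h : ∀ x, f x = true) :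
    {a : Fin n → Bool | MinOne f a} = {fun _ => false} := by
  ext a
  simp only [Set.mem_setOf_eq, Set.mem_singleton_iff, MinOne, h]
  constructor
  · rintro ⟨-, hmin⟩
    funext j
    by_contra hj
    have haj : a j = true := by
      cases hval : a j
      · exact absurd hval hj
      · rfl
    have := hmin (Function.update a j false) (update_false_le a j) (update_false_ne haj)
    simp [h] at this
  · rintro rfl
    refine ⟨trivial, fun b hb hne => absurd ?_ hne⟩
    funext k
    exact le_antisymm (hb k) (Bool.false_le _)

lemma maxZero_const_true {f : (Fin n → Bool) → Bool} (h : ∀ x, f x = true) :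
    {a : Fin n → Bool | MaxZero f a} = ∅ := by
  ext a
  simp [MaxZero, h]

lemma count_const {f : (Fin n → Bool) → Bool} (c : Bool) (h : ∀ x, f x = c) :
    {a : Fin n → Bool | MaxZero f a}.ncard + {a : Fin n → Bool | MinOne f a}.ncard = 1 := by
  cases c
  · rw [maxZero_const_false h, minOne_const_false h]
    simp
  · rw [maxZero_const_true h, minOne_const_true h]
    simp

lemma relevant_const {f : (Fin n → Bool) → Bool} (c : Bool) (h : ∀ x, f x = c) :
    {j : Fin n | Relevant f j} = ∅ := by
  ext j
  simp only [Set.mem_setOf_eq, Set.mem_empty_iff_false, iff_false, Relevant, not_exists]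
  intro x hx
  exact hx (by rw [h, h])

end NestedAux


namespace NestedAux

variable {n : ℕ}

lemma eq_false_of_le_false {x : Bool} (h : x ≤ false) : x = false :=
  le_antisymm h (Bool.false_le x)

lemma eq_true_of_true_le {x : Bool} (h : true ≤ x) : x = true :=
  le_antisymm (Bool.le_true x) h

lemma count_or (i : Fin n) (f g : (Fin n → Bool) → Bool)
    (hind : ∀ x c, g (Function.update x i c) = g x)
    (hg0 : g (fun _ => false) = false)
    (hf : ∀ x, f x = (x i || g x)) :
    {a : Fin n → Bool | MaxZero f a}.ncard + {a : Fin n → Bool | MinOne f a}.ncard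
      = ({a : Fin n → Bool | MaxZero g a}.ncard + {a : Fin n → Bool | MinOne g a}.ncard) + 1 ∧
    {j : Fin n | Relevant f j}.ncard = {j : Fin n | Relevant g j}.ncard + 1 := by
  -- i-coordinate facts
  have hZfi : ∀ a, MaxZero f a → a i = false := by
    rintro a ⟨h0, -⟩
    rw [hf] at h0
    cases hv : a i
    · rfl
    · rw [hv] at h0; simp at h0
  have hUgi : ∀ c, MinOne g c → c i = false := by
    rintro c ⟨hc1, hcmin⟩
    cases hv : c i
    · rfl
    · exfalso
      have := hcmin (Function.update c i false) (update_false_le c i) (update_false_ne hv)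
      rw [hind, hc1] at this
      simp at this
  -- Z-bijection
  have hZ : {a : Fin n → Bool | MaxZero g a}
      = (fun a => Function.update a i true) '' {a : Fin n → Bool | MaxZero f a} := by
    ext c
    simp only [Set.mem_setOf_eq, Set.mem_image]
    constructor
    · rintro ⟨hc0, hcmax⟩
      have hci : c i = true := by
        cases hv : c i
        · exfalso
          have := hcmax (Function.update c i true) (le_update_true c i) (update_true_ne hv)
          rw [hind, hc0] at this
          simp at this
        · rfl
      refine ⟨Function.update c i false, ⟨?_, ?_⟩, ?_⟩
      · rw [hf, Function.update_self, hind, hc0]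
        simp
      · intro b hb hbne
        rw [hf]
        cases hbi : b i
        · have h1 : ∀ k, c k ≤ Function.update b i true k := by
            intro k
            rcases eq_or_ne k i with rfl | hk
            · simp
            · rw [Function.update_of_ne hk]
              have := hb k; rwa [Function.update_of_ne hk] at this
          have h2 : Function.update b i true ≠ c := by
            intro he
            apply hbne
            funext k
            rcases eq_or_ne k i with rfl | hk
            · rw [Function.update_self, hbi]
            · have := congrFun he k
              rw [Function.update_of_ne hk] at this
              rw [this, Function.update_of_ne hk]
          have := hcmax _ h1 h2
          rw [hind] at this
          rw [this]
          simp
        · simp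
      · funext k
        rcases eq_or_ne k i with rfl | hk
        · rw [Function.update_self, hci]
        · rw [Function.update_of_ne hk, Function.update_of_ne hk]
    · rintro ⟨a, ⟨ha0, hamax⟩, rfl⟩
      rw [hf] at ha0
      have hai : a i = false := by
        cases hv : a i
        · rfl
        · rw [hv] at ha0; simp at ha0
      have hga : g a = false := by
        cases hv : g a
        · rfl
        · rw [hv] at ha0; simp at ha0
      constructor
      · rw [hind]; exact hga
      · intro b hb hbne
        have hbi : b i = true := by
          have := hb i
          rw [Function.update_self] at this
          exact eq_true_of_true_le this
        have hb'b : ∀ k, a k ≤ Function.update b i false k := by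
          intro k
          rcases eq_or_ne k i with rfl | hk
          · simp [hai]
          · rw [Function.update_of_ne hk]
            have := hb k; rwa [Function.update_of_ne hk] at this
        have hb'ne : Function.update b i false ≠ a := by
          intro he
          apply hbne
          funext k
          rcases eq_or_ne k i with rfl | hk
          · rw [Function.update_self, hbi]
          · have := congrFun he k
            rw [Function.update_of_ne hk] at this
            rw [Function.update_of_ne hk, ← this]
        have := hamax _ hb'b hb'ne
        rw [hf, Function.update_self, hind] at this
        simpa using this
  have hZinj : Set.InjOn (fun a => Function.update a i true)
      {a : Fin n → Bool | MaxZero f a} := by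
    intro a ha a' ha' he
    funext k
    rcases eq_or_ne k i with rfl | hk
    · rw [hZfi a ha, hZfi a' ha']
    · have := congrFun he k
      simpa [Function.update_of_ne hk] using this
  -- U: insert
  have hU : {a : Fin n → Bool | MinOne f a}
      = insert (Function.update (fun _ => false) i true) {a : Fin n → Bool | MinOne g a} := by
    ext a
    simp only [Set.mem_setOf_eq, Set.mem_insert_iff]
    constructor
    · rintro ⟨ha1, hamin⟩
      cases hai : a i
      · right
        have hga : g a = true := by
          rw [hf, hai] at ha1
          simpa using ha1
        refine ⟨hga, fun b hb hbne => ?_⟩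
        have := hamin b hb hbne
        rw [hf] at this
        exact (Bool.or_eq_false_iff.mp this).2
      · left
        funext k
        rcases eq_or_ne k i with rfl | hk
        · rw [Function.update_self, hai]
        · rw [Function.update_of_ne hk]
          cases hak : a k
          · rfl
          · exfalso
            have := hamin (Function.update a k false) (update_false_le a k) (update_false_ne hak)
            rw [hf, Function.update_of_ne (Ne.symm hk), hai] at this
            simp at this
    · rintro (rfl | ⟨hc1, hcmin⟩)
      · refine ⟨by rw [hf, Function.update_self]; simp, ?_⟩
        intro b hb hbne
        have hbfalse : ∀ k, k ≠ i → b k = false := by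
          intro k hk
          have := hb k
          rw [Function.update_of_ne hk] at this
          exact eq_false_of_le_false this
        have hbi : b i = false := by
          cases hv : b i
          · rfl
          · exfalso
            apply hbne
            funext k
            rcases eq_or_ne k i with rfl | hk
            · rw [Function.update_self, hv]
            · rw [Function.update_of_ne hk]
              exact hbfalse k hk
        have hb0 : b = (fun _ => false) := by
          funext k
          rcases eq_or_ne k i with rfl | hk
          · exact hbi
          · exact hbfalse k hk
        rw [hf, hbi, hb0, hg0]
        rfl
      · have hci : a i = false := hUgi a ⟨hc1, hcmin⟩
        refine ⟨by rw [hf, hc1]; simp, ?_⟩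
        intro b hb hbne
        have hbi : b i = false := by
          have := hb i
          rw [hci] at this
          exact eq_false_of_le_false this
        rw [hf, hbi, hcmin b hb hbne]
        rfl
  have hUnot : (Function.update (fun _ => false) i true : Fin n → Bool)
      ∉ {a : Fin n → Bool | MinOne g a} := by
    intro h
    have := hUgi _ h
    rw [Function.update_self] at this
    simp at this
  -- Relevant sets
  have hinot : i ∉ {j : Fin n | Relevant g j} := by
    rintro ⟨x, hx⟩
    exact hx (by rw [hind, hind])
  have hR : {j : Fin n | Relevant f j} = insert i {j : Fin n | Relevant g j} := by
    ext j
    simp only [Set.mem_setOf_eq, Set.mem_insert_iff]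
    constructor
    · rintro ⟨x, hx⟩
      rcases eq_or_ne j i with rfl | hj
      · exact Or.inl rfl
      · right
        have hx' : ∀ c, f (Function.update x j c)
            = (x i || g (Function.update x j c)) := by
          intro c
          rw [hf, Function.update_of_ne (Ne.symm hj)]
        cases hxi : x i
        · refine ⟨x, fun he => hx ?_⟩
          rw [hx' false, hx' true, he]
        · exfalso
          apply hx
          rw [hx' false, hx' true, hxi]
          simp
    · rintro (rfl | ⟨x, hx⟩)
      · refine ⟨(fun _ => false), ?_⟩
        rw [hf, hf, Function.update_self, Function.update_self, hind, hind, hg0]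
        simp
      · have hji : j ≠ i := by
          rintro rfl
          exact hx (by rw [hind, hind])
        refine ⟨Function.update x i false, fun he => hx ?_⟩
        rw [hf, hf, Function.update_comm (Ne.symm hji), Function.update_comm (Ne.symm hji),
          Function.update_self, Function.update_self, hind, hind] at he
        simpa using he
  constructor
  · rw [hU, Set.ncard_insert_of_notMem hUnot, hZ, Set.ncard_image_of_injOn hZinj]
    ring
  · rw [hR, Set.ncard_insert_of_notMem hinot]

end NestedAux

namespace NestedAux

variable {n : ℕ}

lemma count_and (i : Fin n) (f g : (Fin n → Bool) → Bool)
    (hind : ∀ x c, g (Function.update x i c) = g x)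
    (hg1 : g (fun _ => true) = true)
    (hf : ∀ x, f x = (x i && g x)) :
    {a : Fin n → Bool | MaxZero f a}.ncard + {a : Fin n → Bool | MinOne f a}.ncard
      = ({a : Fin n → Bool | MaxZero g a}.ncard + {a : Fin n → Bool | MinOne g a}.ncard) + 1 ∧
    {j : Fin n | Relevant f j}.ncard = {j : Fin n | Relevant g j}.ncard + 1 := by
  have hUfi : ∀ a, MinOne f a → a i = true := by
    rintro a ⟨h1, -⟩
    rw [hf] at h1
    cases hv : a i
    · rw [hv] at h1; simp at h1
    · rfl
  have hZgi : ∀ c, MaxZero g c → c i = true := by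
    rintro c ⟨hc0, hcmax⟩
    cases hv : c i
    · exfalso
      have := hcmax (Function.update c i true) (le_update_true c i) (update_true_ne hv)
      rw [hind, hc0] at this
      simp at this
    · rfl
  -- U-bijection
  have hU : {a : Fin n → Bool | MinOne g a}
      = (fun a => Function.update a i false) '' {a : Fin n → Bool | MinOne f a} := by
    ext c
    simp only [Set.mem_setOf_eq, Set.mem_image]
    constructor
    · rintro ⟨hc1, hcmin⟩
      have hci : c i = false := by
        cases hv : c i
        · rfl
        · exfalso
          have := hcmin (Function.update c i false) (update_false_le c i) (update_false_ne hv)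
          rw [hind, hc1] at this
          simp at this
      refine ⟨Function.update c i true, ⟨?_, ?_⟩, ?_⟩
      · rw [hf, Function.update_self, hind, hc1]
        rfl
      · intro b hb hbne
        rw [hf]
        cases hbi : b i
        · simp
        · have h1 : ∀ k, Function.update b i false k ≤ c k := by
            intro k
            rcases eq_or_ne k i with rfl | hk
            · simp
            · rw [Function.update_of_ne hk]
              have := hb k; rwa [Function.update_of_ne hk] at this
          have h2 : Function.update b i false ≠ c := by
            intro he
            apply hbne
            funext k
            rcases eq_or_ne k i with rfl | hk
            · rw [Function.update_self, hbi]
            · have := congrFun he k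
              rw [Function.update_of_ne hk] at this
              rw [this, Function.update_of_ne hk]
          have := hcmin _ h1 h2
          rw [hind] at this
          rw [this]
          simp
      · funext k
        rcases eq_or_ne k i with rfl | hk
        · rw [Function.update_self, hci]
        · rw [Function.update_of_ne hk, Function.update_of_ne hk]
    · rintro ⟨a, ⟨ha1, hamin⟩, rfl⟩
      rw [hf] at ha1
      have hai : a i = true := by
        cases hv : a i
        · rw [hv] at ha1; simp at ha1
        · rfl
      have hga : g a = true := by
        cases hv : g a
        · rw [hv] at ha1; simp at ha1
        · rfl
      constructor
      · rw [hind]; exact hga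
      · intro b hb hbne
        have hbi : b i = false := by
          have := hb i
          rw [Function.update_self] at this
          exact eq_false_of_le_false this
        have hb'b : ∀ k, Function.update b i true k ≤ a k := by
          intro k
          rcases eq_or_ne k i with rfl | hk
          · simp [hai]
          · rw [Function.update_of_ne hk]
            have := hb k; rwa [Function.update_of_ne hk] at this
        have hb'ne : Function.update b i true ≠ a := by
          intro he
          apply hbne
          funext k
          rcases eq_or_ne k i with rfl | hk
          · rw [Function.update_self, hbi]
          · have := congrFun he k
            rw [Function.update_of_ne hk] at this
            rw [Function.update_of_ne hk, ← this]
        have := hamin _ hb'b hb'ne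
        rw [hf, Function.update_self, hind] at this
        simpa using this
  have hUinj : Set.InjOn (fun a => Function.update a i false)
      {a : Fin n → Bool | MinOne f a} := by
    intro a ha a' ha' he
    funext k
    rcases eq_or_ne k i with rfl | hk
    · rw [hUfi a ha, hUfi a' ha']
    · have := congrFun he k
      simpa [Function.update_of_ne hk] using this
  -- Z: insert
  have hZ : {a : Fin n → Bool | MaxZero f a}
      = insert (Function.update (fun _ => true) i false) {a : Fin n → Bool | MaxZero g a} := by
    ext a
    simp only [Set.mem_setOf_eq, Set.mem_insert_iff]
    constructor
    · rintro ⟨ha0, hamax⟩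
      cases hai : a i
      · left
        funext k
        rcases eq_or_ne k i with rfl | hk
        · rw [Function.update_self, hai]
        · rw [Function.update_of_ne hk]
          cases hak : a k
          · exfalso
            have := hamax (Function.update a k true) (le_update_true a k) (update_true_ne hak)
            rw [hf, Function.update_of_ne (Ne.symm hk), hai] at this
            simp at this
          · rfl
      · right
        have hga : g a = false := by
          rw [hf, hai] at ha0
          simpa using ha0
        refine ⟨hga, fun b hb hbne => ?_⟩
        have hbi : b i = true := by
          have := hb i
          rw [hai] at this
          exact eq_true_of_true_le this
        have := hamax b hb hbne
        rw [hf, hbi] at this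
        simpa using this
    · rintro (rfl | ⟨hc0, hcmax⟩)
      · refine ⟨by rw [hf, Function.update_self]; simp, ?_⟩
        intro b hb hbne
        have hbtrue : ∀ k, k ≠ i → b k = true := by
          intro k hk
          have := hb k
          rw [Function.update_of_ne hk] at this
          exact eq_true_of_true_le this
        have hbi : b i = true := by
          cases hv : b i
          · exfalso
            apply hbne
            funext k
            rcases eq_or_ne k i with rfl | hk
            · rw [Function.update_self, hv]
            · rw [Function.update_of_ne hk]
              exact hbtrue k hk
          · rfl
        have hb1 : b = (fun _ => true) := by
          funext k
          rcases eq_or_ne k i with rfl | hk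
          · exact hbi
          · exact hbtrue k hk
        rw [hf, hbi, hb1, hg1]
        rfl
      · have hci : a i = true := hZgi a ⟨hc0, hcmax⟩
        refine ⟨by rw [hf, hc0]; simp, ?_⟩
        intro b hb hbne
        have hbi : b i = true := by
          have := hb i
          rw [hci] at this
          exact eq_true_of_true_le this
        rw [hf, hbi, hcmax b hb hbne]
        rfl
  have hZnot : (Function.update (fun _ => true) i false : Fin n → Bool)
      ∉ {a : Fin n → Bool | MaxZero g a} := by
    intro h
    have := hZgi _ h
    rw [Function.update_self] at this
    simp at this
  -- Relevant sets
  have hinot : i ∉ {j : Fin n | Relevant g j} := by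
    rintro ⟨x, hx⟩
    exact hx (by rw [hind, hind])
  have hR : {j : Fin n | Relevant f j} = insert i {j : Fin n | Relevant g j} := by
    ext j
    simp only [Set.mem_setOf_eq, Set.mem_insert_iff]
    constructor
    · rintro ⟨x, hx⟩
      rcases eq_or_ne j i with rfl | hj
      · exact Or.inl rfl
      · right
        have hx' : ∀ c, f (Function.update x j c)
            = (x i && g (Function.update x j c)) := by
          intro c
          rw [hf, Function.update_of_ne (Ne.symm hj)]
        cases hxi : x i
        · exfalso
          apply hx
          rw [hx' false, hx' true, hxi]
          simp
        · refine ⟨x, fun he => hx ?_⟩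
          rw [hx' false, hx' true, he]
    · rintro (rfl | ⟨x, hx⟩)
      · refine ⟨(fun _ => true), ?_⟩
        rw [hf, hf, Function.update_self, Function.update_self, hind, hind, hg1]
        simp
      · have hji : j ≠ i := by
          rintro rfl
          exact hx (by rw [hind, hind])
        refine ⟨Function.update x i true, fun he => hx ?_⟩
        rw [hf, hf, Function.update_comm (Ne.symm hji), Function.update_comm (Ne.symm hji),
          Function.update_self, Function.update_self, hind, hind] at he
        simpa using he
  constructor
  · rw [hZ, Set.ncard_insert_of_notMem hZnot, hU, Set.ncard_image_of_injOn hUinj]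
    ring
  · rw [hR, Set.ncard_insert_of_notMem hinot]

end NestedAux

namespace NestedAux

variable {n : ℕ}

lemma count_lit (i : Fin n) (f : (Fin n → Bool) → Bool) (hf : ∀ x, f x = x i) :
    {a : Fin n → Bool | MaxZero f a}.ncard + {a : Fin n → Bool | MinOne f a}.ncard
      = {j : Fin n | Relevant f j}.ncard + 1 := by
  have hZ : {a : Fin n → Bool | MaxZero f a}
      = {Function.update (fun _ => true) i false} := by
    ext a
    simp only [Set.mem_setOf_eq, Set.mem_singleton_iff]
    constructor
    · rintro ⟨h0, hmax⟩
      rw [hf] at h0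
      funext k
      rcases eq_or_ne k i with rfl | hk
      · rw [Function.update_self]; exact h0
      · rw [Function.update_of_ne hk]
        cases hak : a k
        · exfalso
          have := hmax (Function.update a k true) (le_update_true a k) (update_true_ne hak)
          rw [hf, Function.update_of_ne (Ne.symm hk), h0] at this
          simp at this
        · rfl
    · rintro rfl
      refine ⟨by rw [hf, Function.update_self], ?_⟩
      intro b hb hbne
      rw [hf]
      cases hbi : b i
      · exfalso
        apply hbne
        funext k
        rcases eq_or_ne k i with rfl | hk
        · rw [Function.update_self]; exact hbi
        · rw [Function.update_of_ne hk]
          have := hb k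
          rw [Function.update_of_ne hk] at this
          exact eq_true_of_true_le this
      · rfl
  have hU : {a : Fin n → Bool | MinOne f a}
      = {Function.update (fun _ => false) i true} := by
    ext a
    simp only [Set.mem_setOf_eq, Set.mem_singleton_iff]
    constructor
    · rintro ⟨h1, hmin⟩
      rw [hf] at h1
      funext k
      rcases eq_or_ne k i with rfl | hk
      · rw [Function.update_self]; exact h1
      · rw [Function.update_of_ne hk]
        cases hak : a k
        · rfl
        · exfalso
          have := hmin (Function.update a k false) (update_false_le a k) (update_false_ne hak)
          rw [hf, Function.update_of_ne (Ne.symm hk), h1] at this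
          simp at this
    · rintro rfl
      refine ⟨by rw [hf, Function.update_self], ?_⟩
      intro b hb hbne
      rw [hf]
      cases hbi : b i
      · rfl
      · exfalso
        apply hbne
        funext k
        rcases eq_or_ne k i with rfl | hk
        · rw [Function.update_self]; exact hbi
        · rw [Function.update_of_ne hk]
          have := hb k
          rw [Function.update_of_ne hk] at this
          exact eq_false_of_le_false this
  have hR : {j : Fin n | Relevant f j} = {i} := by
    ext j
    simp only [Set.mem_setOf_eq, Set.mem_singleton_iff]
    constructor
    · rintro ⟨x, hx⟩
      by_contra hj
      apply hx
      rw [hf, hf, Function.update_of_ne (Ne.symm hj), Function.update_of_ne (Ne.symm hj)]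
    · rintro rfl
      refine ⟨(fun _ => false), ?_⟩
      rw [hf, hf, Function.update_self, Function.update_self]
      simp
  rw [hZ, hU, hR]
  simp

lemma main : ∀ (φ : NF n), φ.WF → Positive φ.eval →
    {a : Fin n → Bool | MaxZero φ.eval a}.ncard + {a : Fin n → Bool | MinOne φ.eval a}.ncard
      = {j : Fin n | Relevant φ.eval j}.ncard + 1 := by
  intro φ
  induction φ with
  | lit b i =>
      intro _ hpos
      have hb : b = true := by
        cases b
        · exfalso
          have h1 : (NF.lit false i).eval (fun _ => false) = true := by simp [NF.eval]
          have := hpos (fun _ => false) (fun _ => true) (fun _ => Bool.false_le _) h1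
          simp [NF.eval] at this
        · rfl
      subst hb
      exact count_lit i _ (fun x => by simp [NF.eval])
  | orF b i t ih =>
      rintro ⟨hm, hwt⟩ hpos
      have hind : ∀ (x : Fin n → Bool) (c : Bool),
          t.eval (Function.update x i c) = t.eval x := fun x c => eval_update hm x c
      by_cases hg : ∀ x, t.eval x = true
      · have hc : ∀ x, (NF.orF b i t).eval x = true := fun x => by simp [NF.eval, hg x]
        rw [count_const true hc, relevant_const true hc]
        simp
      · push_neg at hg
        obtain ⟨x₀, hx₀⟩ := hg
        have hx₀f : t.eval x₀ = false := by
          cases hv : t.eval x₀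
          · rfl
          · exact absurd hv hx₀
        have hb : b = true := by
          cases b
          · exfalso
            have hle : ∀ k, Function.update x₀ i false k ≤ Function.update x₀ i true k := by
              intro k
              rcases eq_or_ne k i with rfl | hk
              · simp
              · simp [Function.update_of_ne hk]
            have h1 : (NF.orF false i t).eval (Function.update x₀ i false) = true := by
              simp [NF.eval]
            have := hpos _ _ hle h1
            simp [NF.eval, hind, hx₀f] at this
          · rfl
        subst hb
        have hf : ∀ x, (NF.orF true i t).eval x = (x i || t.eval x) := fun x => by
          simp [NF.eval]
        have hpos' : Positive t.eval := by
          intro x y hxy hx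
          have h1 : (NF.orF true i t).eval (Function.update x i false) = true := by
            rw [hf, Function.update_self, hind, hx]
            simp
          have h2 := hpos _ _ (update_le i false hxy) h1
          rw [hf, Function.update_self, hind] at h2
          simpa using h2
        have hg0 : t.eval (fun _ => false) = false := by
          cases hv : t.eval (fun _ => false)
          · rfl
          · exfalso
            have := hpos' _ x₀ (fun k => Bool.false_le _) hv
            rw [hx₀f] at this
            simp at this
        obtain ⟨h1, h2⟩ := count_or i _ t.eval hind hg0 hf
        rw [h1, h2, ih hwt hpos']
  | andF b i t ih =>
      rintro ⟨hm, hwt⟩ hpos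
      have hind : ∀ (x : Fin n → Bool) (c : Bool),
          t.eval (Function.update x i c) = t.eval x := fun x c => eval_update hm x c
      by_cases hg : ∀ x, t.eval x = false
      · have hc : ∀ x, (NF.andF b i t).eval x = false := fun x => by simp [NF.eval, hg x]
        rw [count_const false hc, relevant_const false hc]
        simp
      · push_neg at hg
        obtain ⟨x₀, hx₀⟩ := hg
        have hx₀t : t.eval x₀ = true := by
          cases hv : t.eval x₀
          · exact absurd hv hx₀
          · rfl
        have hb : b = true := by
          cases b
          · exfalso
            have hle : ∀ k, Function.update x₀ i false k ≤ Function.update x₀ i true k := by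
              intro k
              rcases eq_or_ne k i with rfl | hk
              · simp
              · simp [Function.update_of_ne hk]
            have h1 : (NF.andF false i t).eval (Function.update x₀ i false) = true := by
              simp [NF.eval, hind, hx₀t]
            have := hpos _ _ hle h1
            simp [NF.eval] at this
          · rfl
        subst hb
        have hf : ∀ x, (NF.andF true i t).eval x = (x i && t.eval x) := fun x => by
          simp [NF.eval]
        have hpos' : Positive t.eval := by
          intro x y hxy hx
          have h1 : (NF.andF true i t).eval (Function.update x i true) = true := by
            rw [hf, Function.update_self, hind, hx]
            rfl
          have h2 := hpos _ _ (update_le i true hxy) h1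
          rw [hf, Function.update_self, hind] at h2
          simpa using h2
        have hg1 : t.eval (fun _ => true) = true :=
          hpos' x₀ _ (fun k => Bool.le_true _) hx₀t
        obtain ⟨h1, h2⟩ := count_and i _ t.eval hind hg1 hf
        rw [h1, h2, ih hwt hpos']

end NestedAux

/-- A positive nested function of `n` variables (linear read-once and depending on
all variables) has exactly `n+1` extremal points: `|Z^f| + |U^f| = n + 1`. -/
theorem nested_extremal_count (n : ℕ) (f : (Fin n → Bool) → Bool)
    (hpos : Positive f) (hlro : LinearReadOnce f)
    (hdep : ∀ j : Fin n, Relevant f j) :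
    {a : Fin n → Bool | MaxZero f a}.ncard + {a : Fin n → Bool | MinOne f a}.ncard
      = n + 1 := by
  rcases hlro with ⟨c, hc⟩ | ⟨φ, hwf, hφ⟩
  · have hn : n = 0 := by
      by_contra h
      obtain ⟨x, hx⟩ := hdep ⟨0, Nat.pos_of_ne_zero h⟩
      exact hx (by rw [hc, hc])
    subst hn
    rw [NestedAux.count_const c hc]
  · have hfe : f = φ.eval := funext hφ
    subst hfe
    rw [NestedAux.main φ hwf hpos]
    have huniv : {j : Fin n | Relevant φ.eval j} = Set.univ :=
      Set.eq_univ_of_forall fun j => hdep j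
    rw [huniv, Set.ncard_univ]
    simp
end
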